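/- arXiv:2104.04705 — 8 statements merged into one kernel-verified Lean document; each statement's English description precedes it below -/
import Mathlib

section
/- Let ψ ∈ C²(ℝ) and ξ ∈ ℝ be such that ψ is symmetric about ξ (i.e., ψ(2ξ − x) = ψ(x) for all x), ψ is non-decreasing on [ξ, ∞), and ψ'' is non-increasing on [ξ, ∞). Then for all x < y with ψ(x) ≤ ψ(y), one has sinh(ψ(y) − ψ(x))/(y − x) ≥ (ψ'(y) + ψ'(x))/2. -/
open Set

theorem stmt1
    (ψ : ℝ → ℝ) (hψ : ContDiff ℝ 2 ψ) (ξ : ℝ)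
    (hsym : ∀ x : ℝ, ψ (2 * ξ - x) = ψ x)
    (hmono : MonotoneOn ψ (Set.Ici ξ))
    (hconc : AntitoneOn (deriv (deriv ψ)) (Set.Ici ξ))
    (x y : ℝ) (hxy : x < y) (hψxy : ψ x ≤ ψ y) :
    Real.sinh (ψ y - ψ x) / (y - x) ≥ (deriv ψ y + deriv ψ x) / 2 := by
  have hd1 : Differentiable ℝ ψ := hψ.differentiable two_ne_zero
  have hcd1 : ContDiff ℝ 1 (deriv ψ) := by
    have h2 : ContDiff ℝ ((1 : ℕ∞) + 1) ψ := by exact_mod_cast hψ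
    exact (contDiff_succ_iff_deriv.mp h2).2.2
  have hd2 : Differentiable ℝ (deriv ψ) := hcd1.differentiable one_ne_zero
  -- symmetry of the derivative
  have hgsym : ∀ t : ℝ, deriv ψ (2 * ξ - t) = - deriv ψ t := by
    intro t
    have hid : HasDerivAt (fun s : ℝ => 2 * ξ - s) (-1) t := by
      simpa using (hasDerivAt_id t).const_sub (2 * ξ)
    have h1 : HasDerivAt (fun s : ℝ => ψ (2 * ξ - s)) (deriv ψ (2 * ξ - t) * (-1)) t :=
      (hd1 (2 * ξ - t)).hasDerivAt.comp t hid
    have hfun : (fun s : ℝ => ψ (2 * ξ - s)) = ψ := funext hsym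
    rw [hfun] at h1
    have := h1.deriv
    linarith [this]
  have hgξ : deriv ψ ξ = 0 := by
    have := hgsym ξ
    have h2 : (2 : ℝ) * ξ - ξ = ξ := by ring
    rw [h2] at this; linarith
  -- derivative nonneg on Ici ξ
  have hg0 : ∀ t : ℝ, ξ ≤ t → 0 ≤ deriv ψ t := by
    intro t ht
    have hslope : Filter.Tendsto (slope ψ t) (nhdsWithin t (Set.Ioi t)) (nhds (deriv ψ t)) := by
      refine (hasDerivAt_iff_tendsto_slope.mp (hd1 t).hasDerivAt).mono_left
        (nhdsWithin_mono _ ?_)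
      intro s hs
      exact ne_of_gt hs
    refine ge_of_tendsto hslope ?_
    filter_upwards [self_mem_nhdsWithin] with s hs
    have hts : t < s := hs
    have h1 : ψ t ≤ ψ s := hmono ht (ht.trans hts.le) hts.le
    rw [slope_def_field]
    exact div_nonneg (by linarith) (by linarith)
  -- concavity of the derivative on Ici ξ
  have hgconc : ConcaveOn ℝ (Set.Ici ξ) (deriv ψ) :=
    AntitoneOn.concaveOn_of_deriv (convex_Ici ξ) hcd1.continuous.continuousOn
      hd2.differentiableOn (hconc.mono interior_subset)
  -- trapezoid inequality on [a,b] ⊆ [ξ,∞)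
  have trap : ∀ a b : ℝ, ξ ≤ a → a ≤ b →
      (b - a) * (deriv ψ a + deriv ψ b) / 2 ≤ ψ b - ψ a := by
    intro a b ha hab
    set F : ℝ → ℝ := fun t => ψ t - ψ a - (t - a) * (deriv ψ a + deriv ψ t) / 2 with hF
    have hdF : ∀ t : ℝ, HasDerivAt F
        ((deriv ψ t - deriv ψ a) / 2 - (t - a) * deriv (deriv ψ) t / 2) t := by
      intro t
      have h1 : HasDerivAt (fun s => ψ s - ψ a) (deriv ψ t) t :=
        (hd1 t).hasDerivAt.sub_const _
      have h2 := ((hasDerivAt_id t).sub_const a).mul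
          ((hasDerivAt_const t (deriv ψ a)).add (hd2 t).hasDerivAt)
      have h3 := h1.sub (h2.div_const 2)
      refine h3.congr_deriv ?_
      simp only [id_eq, Pi.add_apply]
      ring
    have key : ∀ t ∈ interior (Set.Icc a b), 0 ≤ deriv F t := by
      intro t htmem
      rw [interior_Icc] at htmem
      obtain ⟨hat, htb⟩ := htmem
      rw [(hdF t).deriv]
      obtain ⟨c, hc, hceq⟩ := exists_deriv_eq_slope (deriv ψ) hat
        hd2.continuous.continuousOn hd2.differentiableOn
      have hc1 : ξ ≤ c := ha.trans hc.1.le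
      have hc2 : deriv (deriv ψ) t ≤ deriv (deriv ψ) c :=
        hconc hc1 (ha.trans hat.le) hc.2.le
      have hta : 0 < t - a := by linarith
      have : deriv ψ t - deriv ψ a = (t - a) * deriv (deriv ψ) c := by
        field_simp at hceq
        linarith [hceq]
      nlinarith
    have hmonoF : MonotoneOn F (Set.Icc a b) :=
      monotoneOn_of_deriv_nonneg (convex_Icc a b)
        (fun t _ => ((hdF t).differentiableAt.continuousAt).continuousWithinAt)
        (fun t _ => (hdF t).differentiableAt.differentiableWithinAt) key
    have hFa : F a = 0 := by simp [hF]
    have := hmonoF (Set.mem_Icc.mpr ⟨le_rfl, hab⟩) (Set.mem_Icc.mpr ⟨hab, le_rfl⟩) hab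
    rw [hFa] at this
    simp only [hF] at this
    linarith
  -- core inequality without sinh
  have hyx : 0 < y - x := by linarith
  have KEY : (deriv ψ y + deriv ψ x) * (y - x) / 2 ≤ ψ y - ψ x := by
    rcases le_or_gt ξ x with hx | hx
    · have := trap x y hx hxy.le
      nlinarith
    · have hx'ξ : ξ < 2 * ξ - x := by linarith
      have hψx' : ψ (2 * ξ - x) = ψ x := hsym x
      have hgx' : deriv ψ (2 * ξ - x) = - deriv ψ x := hgsym x
      rcases le_or_gt y ξ with hy | hy
      · -- both left of ξ : ψ x = ψ y, derivatives nonpositive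
        have hy'ξ : ξ ≤ 2 * ξ - y := by linarith
        have h1 : ψ (2 * ξ - y) ≤ ψ (2 * ξ - x) :=
          hmono hy'ξ hx'ξ.le (by linarith)
        rw [hsym y, hsym x] at h1
        have heq : ψ y = ψ x := le_antisymm h1 hψxy
        have hgx : deriv ψ x ≤ 0 := by
          have := hg0 _ hx'ξ.le; linarith [hgx']
        have hgy : deriv ψ y ≤ 0 := by
          have h2 := hg0 _ hy'ξ
          have h3 := hgsym y
          linarith
        nlinarith
      · rcases le_or_gt (2 * ξ - x) y with hxy' | hxy'
        · -- main case: ξ < x' ≤ y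
          have htrap := trap (2 * ξ - x) y hx'ξ.le hxy'
          rw [hψx', hgx'] at htrap
          -- concavity : (y - ξ) * g x' ≥ (x' - ξ) * g y
          have ha : 0 < (2 * ξ - x) - ξ := by linarith
          have hb : 0 < y - ξ := by linarith
          have hlam : (0:ℝ) ≤ ((2 * ξ - x) - ξ) / (y - ξ) := by positivity
          have hlam1 : ((2 * ξ - x) - ξ) / (y - ξ) ≤ 1 := by
            rw [div_le_one hb]; linarith
          have hcomb := hgconc.2 (Set.mem_Ici.mpr le_rfl) (Set.mem_Ici.mpr hy.le)
            (show (0:ℝ) ≤ 1 - ((2 * ξ - x) - ξ) / (y - ξ) by linarith) hlam (by ring)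
          have hpt : (1 - ((2 * ξ - x) - ξ) / (y - ξ)) • ξ +
              (((2 * ξ - x) - ξ) / (y - ξ)) • y = 2 * ξ - x := by
            have hne : y - ξ ≠ 0 := hb.ne'
            simp only [smul_eq_mul]
            field_simp
            ring
          rw [hpt, hgξ] at hcomb
          simp only [smul_eq_mul, mul_zero, zero_add] at hcomb
          have hconc2 : ((2 * ξ - x) - ξ) * deriv ψ y ≤ (y - ξ) * deriv ψ (2 * ξ - x) := by
            have h4 := mul_le_mul_of_nonneg_left hcomb hb.le
            have h5 : (y - ξ) * (((2 * ξ - x) - ξ) / (y - ξ) * deriv ψ y) =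
                ((2 * ξ - x) - ξ) * deriv ψ y := by
              field_simp
            linarith [h4, h5.symm.le]
          rw [hgx'] at hconc2
          nlinarith [htrap, hconc2]
        · -- degenerate case: ξ < y < x'
          have h1 : ψ y ≤ ψ (2 * ξ - x) := hmono (Set.mem_Ici.mpr hy.le)
            (Set.mem_Ici.mpr hx'ξ.le) hxy'.le
          rw [hψx'] at h1
          have heq : ψ y = ψ x := le_antisymm h1 hψxy
          have htrap := trap y (2 * ξ - x) hy.le hxy'.le
          rw [hψx', heq, hgx'] at htrap
          have hgy := hg0 y hy.le
          have hgx'nn := hg0 _ hx'ξ.le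
          rw [hgx'] at hgx'nn
          have h6 : deriv ψ y + -deriv ψ x ≤ 0 := by
            by_contra h7
            push_neg at h7
            have h8 := mul_pos (show (0:ℝ) < 2 * ξ - x - y by linarith) h7
            linarith [htrap]
          have hgy0 : deriv ψ y = 0 := by linarith
          have hgx0 : deriv ψ x = 0 := by linarith
          rw [hgy0, hgx0, heq]
          simp
  -- conclude using sinh t ≥ t
  have hD : 0 ≤ ψ y - ψ x := by linarith
  have hsinh : ψ y - ψ x ≤ Real.sinh (ψ y - ψ x) := Real.self_le_sinh_iff.mpr hD
  rw [ge_iff_le, le_div_iff₀ hyx]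
  nlinarith [KEY, hsinh]
end

section
/- Let f : [0, ∞) → [0, ∞) be continuously differentiable with 0 < ∫₀^∞ f(t) dt < ∞, and suppose there is a_f ∈ (0, ∞] such that f > 0 on [0, a_f), f = 0 on [a_f, ∞), and f is non-increasing and log-concave on [0, a_f). Then the flat dilation profile θ ↦ D♭(f, [0, ∞))(θ) is concave on [0, 1]. -/
open MeasureTheory Set
open scoped ENNReal

set_option maxHeartbeats 2000000 in
theorem stmt3
    (f : ℝ → ℝ) (hf : ContDiffOn ℝ 1 f (Set.Ici 0))
    (hfI : IntegrableOn f (Set.Ioi 0) volume)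
    (hIpos : 0 < ∫ t in Set.Ioi (0:ℝ), f t)
    (af : ℝ≥0∞) (haf : 0 < af)
    (hpos : ∀ x : ℝ, 0 ≤ x → ENNReal.ofReal x < af → 0 < f x)
    (hzero : ∀ x : ℝ, 0 ≤ x → af ≤ ENNReal.ofReal x → f x = 0)
    (hdecr : AntitoneOn f {x : ℝ | 0 ≤ x ∧ ENNReal.ofReal x < af})
    (hlogconc : ConcaveOn ℝ {x : ℝ | 0 ≤ x ∧ ENNReal.ofReal x < af} (fun x => Real.log (f x)))
    (α : ℝ → ℝ)
    (hα : ∀ θ ∈ Set.Icc (0:ℝ) 1, 0 ≤ α θ ∧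
      ∫ t in Set.Ioc (0:ℝ) (α θ), f t = θ * ∫ t in Set.Ioi (0:ℝ), f t) :
    ConcaveOn ℝ (Set.Icc (0:ℝ) 1)
      (fun θ => f (α θ) * α θ / ∫ t in Set.Ioi (0:ℝ), f t) := by
  set I : ℝ := ∫ t in Set.Ioi (0:ℝ), f t with hIdef
  have hIne : I ≠ 0 := ne_of_gt hIpos
  have hcont : ContinuousOn f (Set.Ici 0) := hf.continuousOn
  have hfnn : ∀ x : ℝ, 0 ≤ x → 0 ≤ f x := by
    intro x hx
    rcases lt_or_ge (ENNReal.ofReal x) af with h | h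
    · exact (hpos x hx h).le
    · exact le_of_eq (hzero x hx h).symm
  -- interval integrability
  have hii : ∀ ⦃x y : ℝ⦄, 0 ≤ x → x ≤ y → IntervalIntegrable f volume x y := by
    intro x y hx hxy
    rw [intervalIntegrable_iff_integrableOn_Ioc_of_le hxy]
    exact hfI.mono_set (fun t ht => lt_of_le_of_lt hx ht.1)
  set F : ℝ → ℝ := fun x => ∫ t in Set.Ioc (0:ℝ) x, f t with hFdef
  have hFi : ∀ x : ℝ, 0 ≤ x → F x = ∫ t in (0:ℝ)..x, f t := by
    intro x hx
    rw [intervalIntegral.integral_of_le hx]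
  have hFadd : ∀ x y : ℝ, 0 ≤ x → x ≤ y → F y = F x + ∫ t in x..y, f t := by
    intro x y hx hxy
    rw [hFi x hx, hFi y (hx.trans hxy)]
    exact (intervalIntegral.integral_add_adjacent_intervals (hii le_rfl hx) (hii hx hxy)).symm
  have hFmono : ∀ x y : ℝ, 0 ≤ x → x ≤ y → F x ≤ F y := by
    intro x y hx hxy
    rw [hFadd x y hx hxy]
    have : 0 ≤ ∫ t in x..y, f t :=
      intervalIntegral.integral_nonneg hxy (fun u hu => hfnn u (hx.trans hu.1))
    linarith
  have hsplit : ∀ x : ℝ, 0 ≤ x → I = F x + ∫ t in Set.Ioi x, f t := by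
    intro x hx
    have hd : Disjoint (Set.Ioc 0 x) (Set.Ioi x) := by
      apply Set.disjoint_left.2
      intro t ht ht'
      exact absurd ht.2 (not_le.2 ht')
    have := MeasureTheory.setIntegral_union hd measurableSet_Ioi
      (hfI.mono_set (fun t ht => ht.1)) (hfI.mono_set (fun t ht => lt_of_le_of_lt hx ht))
    rw [Set.Ioc_union_Ioi_eq_Ioi hx] at this
    exact this
  -- af must be finite
  by_cases haftop : af = ⊤
  · exfalso
    obtain ⟨hα1nn, hα1⟩ := hα 1 (by norm_num)
    have htail : 0 < ∫ t in Set.Ioi (α 1), f t := by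
      have hx : (0:ℝ) ≤ α 1 := hα1nn
      have h1 : 0 < ∫ t in (α 1)..(α 1 + 1), f t := by
        apply intervalIntegral.intervalIntegral_pos_of_pos_on (hii hx (by linarith))
        · intro t ht
          exact hpos t (hx.trans ht.1.le) (haftop ▸ ENNReal.ofReal_lt_top)
        · linarith
      have h2 : (∫ t in (α 1)..(α 1 + 1), f t) ≤ ∫ t in Set.Ioi (α 1), f t := by
        rw [intervalIntegral.integral_of_le (by linarith : α 1 ≤ α 1 + 1)]
        apply MeasureTheory.setIntegral_mono_set
          (hfI.mono_set (fun t ht => lt_of_le_of_lt hx ht))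
        · exact (ae_restrict_iff' measurableSet_Ioi).2 (Filter.Eventually.of_forall
            (fun t ht => hfnn t (hx.trans (le_of_lt ht))))
        · exact (Set.Ioc_subset_Ioi_self).eventuallyLE
      linarith
    have := hsplit (α 1) hα1nn
    rw [one_mul] at hα1
    rw [← hα1] at this
    nlinarith [htail]
  -- the finite threshold
  set a : ℝ := af.toReal with hadef
  have ha_pos : 0 < a := ENNReal.toReal_pos haf.ne' haftop
  have hofa : ENNReal.ofReal a = af := ENNReal.ofReal_toReal haftop
  have hS : {x : ℝ | 0 ≤ x ∧ ENNReal.ofReal x < af} = Set.Ico 0 a := by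
    ext x
    simp only [Set.mem_setOf_eq, Set.mem_Ico]
    constructor
    · rintro ⟨h1, h2⟩
      exact ⟨h1, (ENNReal.ofReal_lt_iff_lt_toReal h1 haftop).1 h2⟩
    · rintro ⟨h1, h2⟩
      exact ⟨h1, (ENNReal.ofReal_lt_iff_lt_toReal h1 haftop).2 h2⟩
  rw [hS] at hdecr hlogconc
  have hfpos : ∀ x : ℝ, 0 ≤ x → x < a → 0 < f x := by
    intro x h1 h2
    exact hpos x h1 ((ENNReal.ofReal_lt_iff_lt_toReal h1 haftop).2 h2)
  have hfz : ∀ x : ℝ, a ≤ x → f x = 0 := by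
    intro x hx
    exact hzero x (ha_pos.le.trans hx) (by rw [← hofa]; exact ENNReal.ofReal_le_ofReal hx)
  have hFstrict : ∀ x y : ℝ, 0 ≤ x → x < y → y ≤ a → F x < F y := by
    intro x y hx hxy hya
    rw [hFadd x y hx hxy.le]
    have : 0 < ∫ t in x..y, f t := by
      apply intervalIntegral.intervalIntegral_pos_of_pos_on (hii hx hxy.le) _ hxy
      intro t ht
      exact hfpos t (hx.trans ht.1.le) (lt_of_lt_of_le ht.2 hya)
    linarith
  have hFa : ∀ x : ℝ, a ≤ x → F x = I := by
    intro x hx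
    have h0x : (0:ℝ) ≤ x := ha_pos.le.trans hx
    have htail : (∫ t in Set.Ioi x, f t) = 0 := by
      rw [MeasureTheory.setIntegral_congr_fun measurableSet_Ioi
        (fun t (ht : t ∈ Set.Ioi x) => hfz t (hx.trans (le_of_lt ht)))]
      simp
    have := hsplit x h0x
    rw [htail] at this
    linarith
  -- basic α facts
  have hαnn : ∀ θ ∈ Set.Icc (0:ℝ) 1, 0 ≤ α θ := fun θ hθ => (hα θ hθ).1
  have hαF : ∀ θ ∈ Set.Icc (0:ℝ) 1, F (α θ) = θ * I := fun θ hθ => (hα θ hθ).2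
  have hαlt : ∀ θ : ℝ, 0 ≤ θ → θ < 1 → α θ < a := by
    intro θ h0 h1
    by_contra h
    push_neg at h
    have := hαF θ ⟨h0, h1.le⟩
    rw [hFa (α θ) h] at this
    nlinarith
  have hαpos : ∀ θ : ℝ, 0 < θ → θ ≤ 1 → 0 < α θ := by
    intro θ h0 h1
    rcases (hαnn θ ⟨h0.le, h1⟩).lt_or_eq with h | h
    · exact h
    · exfalso
      have := hαF θ ⟨h0.le, h1⟩
      rw [← h] at this
      simp only [hFdef] at this
      rw [Set.Ioc_self, MeasureTheory.setIntegral_empty] at this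
      nlinarith
  have hαmono : ∀ θ₁ ∈ Set.Icc (0:ℝ) 1, ∀ θ₂ ∈ Set.Icc (0:ℝ) 1, θ₁ < θ₂ → α θ₁ < α θ₂ := by
    intro θ₁ h1 θ₂ h2 h12
    by_contra h
    push_neg at h
    have hm := hFmono (α θ₂) (α θ₁) (hαnn θ₂ h2) h
    rw [hαF θ₁ h1, hαF θ₂ h2] at hm
    nlinarith
  -- continuity of α on the open interval
  have hαcont : ∀ θ₀ ∈ Set.Ioo (0:ℝ) 1, ContinuousAt α θ₀ := by
    intro θ₀ hθ₀
    have hθIcc : θ₀ ∈ Set.Icc (0:ℝ) 1 := ⟨hθ₀.1.le, hθ₀.2.le⟩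
    have hx0pos : 0 < α θ₀ := hαpos θ₀ hθ₀.1 hθ₀.2.le
    have hx0lt : α θ₀ < a := hαlt θ₀ hθ₀.1.le hθ₀.2
    rw [Metric.continuousAt_iff]
    intro ε hε
    set x₀ := α θ₀ with hx₀
    set ε' : ℝ := min ε (min (x₀ / 2) ((a - x₀) / 2)) with hε'def
    have hε'pos : 0 < ε' := lt_min hε (lt_min (by linarith) (by linarith))
    have hε'1 : ε' ≤ ε := min_le_left _ _
    have hε'2 : ε' ≤ x₀ / 2 := le_trans (min_le_right _ _) (min_le_left _ _)
    have hε'3 : ε' ≤ (a - x₀) / 2 := le_trans (min_le_right _ _) (min_le_right _ _)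
    have hlow : F (x₀ - ε') < θ₀ * I := by
      have h := hFstrict (x₀ - ε') x₀ (by linarith) (by linarith) (by linarith)
      rwa [hαF θ₀ hθIcc] at h
    have hhigh : θ₀ * I < F (x₀ + ε') := by
      have h := hFstrict x₀ (x₀ + ε') (by linarith) (by linarith) (by linarith)
      rwa [hαF θ₀ hθIcc] at h
    set δ : ℝ := min (min ((θ₀ * I - F (x₀ - ε')) / I) ((F (x₀ + ε') - θ₀ * I) / I))
        (min θ₀ (1 - θ₀)) with hδdef
    have hδpos : 0 < δ := by
      apply lt_min (lt_min _ _) (lt_min hθ₀.1 (by linarith [hθ₀.2]))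
      · apply div_pos (by linarith) hIpos
      · apply div_pos (by linarith) hIpos
    refine ⟨δ, hδpos, ?_⟩
    intro θ hdist
    rw [Real.dist_eq] at hdist ⊢
    have hδ1 : δ ≤ (θ₀ * I - F (x₀ - ε')) / I := le_trans (min_le_left _ _) (min_le_left _ _)
    have hδ2 : δ ≤ (F (x₀ + ε') - θ₀ * I) / I := le_trans (min_le_left _ _) (min_le_right _ _)
    have hδ3 : δ ≤ θ₀ := le_trans (min_le_right _ _) (min_le_left _ _)
    have hδ4 : δ ≤ 1 - θ₀ := le_trans (min_le_right _ _) (min_le_right _ _)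
    have hδ1' : δ * I ≤ θ₀ * I - F (x₀ - ε') := (le_div_iff₀ hIpos).1 hδ1
    have hδ2' : δ * I ≤ F (x₀ + ε') - θ₀ * I := (le_div_iff₀ hIpos).1 hδ2
    have habs := abs_lt.1 hdist
    have hθmem : θ ∈ Set.Icc (0:ℝ) 1 := ⟨by linarith [habs.1], by linarith [habs.2]⟩
    have hFθ := hαF θ hθmem
    have hmul1 : -(δ * I) < (θ - θ₀) * I := by
      have := mul_lt_mul_of_pos_right habs.1 hIpos
      nlinarith
    have hmul2 : (θ - θ₀) * I < δ * I := mul_lt_mul_of_pos_right habs.2 hIpos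
    have hup : α θ < x₀ + ε' := by
      by_contra h
      push_neg at h
      have hm := hFmono (x₀ + ε') (α θ) (by linarith) h
      rw [hFθ] at hm
      nlinarith
    have hdown : x₀ - ε' < α θ := by
      by_contra h
      push_neg at h
      have hm := hFmono (α θ) (x₀ - ε') (hαnn θ hθmem) h
      rw [hFθ] at hm
      nlinarith
    rw [abs_lt]
    constructor <;> [linarith; linarith]
  -- derivative of F
  have hFderiv : ∀ x : ℝ, 0 < x → HasDerivAt F (f x) x := by
    intro x hx
    have hconAt : ContinuousAt f x := hcont.continuousAt (Ici_mem_nhds hx)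
    have hmeas : StronglyMeasurableAtFilter f (nhds x) volume :=
      ContinuousAt.stronglyMeasurableAtFilter isOpen_Ioi
        (fun y hy => hcont.continuousAt (Ici_mem_nhds hy)) x hx
    have h1 : HasDerivAt (fun y => ∫ t in (0:ℝ)..y, f t) (f x) x :=
      intervalIntegral.integral_hasDerivAt_right (hii le_rfl hx.le) hmeas hconAt
    apply h1.congr_of_eventuallyEq
    filter_upwards [Ioi_mem_nhds hx] with y hy
    exact hFi y (le_of_lt hy)
  -- derivative of α
  have hαderiv : ∀ θ₀ ∈ Set.Ioo (0:ℝ) 1, HasDerivAt α ((f (α θ₀))⁻¹ * I) θ₀ := by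
    intro θ₀ hθ₀
    have hθIcc : θ₀ ∈ Set.Icc (0:ℝ) 1 := ⟨hθ₀.1.le, hθ₀.2.le⟩
    have hx0pos : 0 < α θ₀ := hαpos θ₀ hθ₀.1 hθ₀.2.le
    have hx0lt : α θ₀ < a := hαlt θ₀ hθ₀.1.le hθ₀.2
    have hfx0 : 0 < f (α θ₀) := hfpos _ hx0pos.le hx0lt
    set β : ℝ → ℝ := fun t => α (t / I) with hβ
    have hcancel : ∀ θ : ℝ, θ * I / I = θ := fun θ => mul_div_cancel_right₀ θ hIne
    have hβα : ∀ θ : ℝ, β (θ * I) = α θ := by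
      intro θ
      show α (θ * I / I) = α θ
      rw [hcancel]
    have hβcont : ContinuousAt β (θ₀ * I) := by
      have h2 : ContinuousAt (fun t : ℝ => t / I) (θ₀ * I) :=
        (continuous_id.div_const I).continuousAt
      have h3 : ContinuousAt α ((θ₀ * I) / I) := by rw [hcancel]; exact hαcont θ₀ hθ₀
      exact ContinuousAt.comp h3 h2
    have hg : β (θ₀ * I) = α θ₀ := hβα θ₀
    have hFd : HasDerivAt F (f (α θ₀)) (β (θ₀ * I)) := by rw [hg]; exact hFderiv _ hx0pos
    have hfg : ∀ᶠ t in nhds (θ₀ * I), F (β t) = t := by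
      have hmem : Set.Ioo (0:ℝ) I ∈ nhds (θ₀ * I) := by
        apply Ioo_mem_nhds
        · exact mul_pos hθ₀.1 hIpos
        · nlinarith [hθ₀.2, hIpos]
      filter_upwards [hmem] with t ht
      have htI : t / I ∈ Set.Icc (0:ℝ) 1 :=
        ⟨le_of_lt (div_pos ht.1 hIpos), by rw [div_le_one hIpos]; exact ht.2.le⟩
      have hFt := hαF (t / I) htI
      show F (α (t / I)) = t
      rw [hFt, div_mul_cancel₀ _ hIne]
    have hβd : HasDerivAt β (f (α θ₀))⁻¹ (θ₀ * I) :=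
      HasDerivAt.of_local_left_inverse hβcont hFd (ne_of_gt hfx0) hfg
    have hlin : HasDerivAt (fun θ : ℝ => θ * I) I θ₀ := by
      simpa using (hasDerivAt_id θ₀).mul_const I
    have hcomp : HasDerivAt (fun θ => β (θ * I)) ((f (α θ₀))⁻¹ * I) θ₀ := by
      have := hβd.comp θ₀ hlin; exact this
    apply hcomp.congr_of_eventuallyEq
    filter_upwards with θ
    exact (hβα θ).symm
  -- derivative of D
  set D : ℝ → ℝ := fun θ => f (α θ) * α θ / I with hDdef
  have hDderiv : ∀ θ₀ ∈ Set.Ioo (0:ℝ) 1,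
      HasDerivAt D (α θ₀ * deriv f (α θ₀) / f (α θ₀) + 1) θ₀ := by
    intro θ₀ hθ₀
    have hx0pos : 0 < α θ₀ := hαpos θ₀ hθ₀.1 hθ₀.2.le
    have hx0lt : α θ₀ < a := hαlt θ₀ hθ₀.1.le hθ₀.2
    have hfx0 : 0 < f (α θ₀) := hfpos _ hx0pos.le hx0lt
    have hdiffAt : DifferentiableAt ℝ f (α θ₀) :=
      (hf.differentiableOn one_ne_zero).differentiableAt (Ici_mem_nhds hx0pos)
    have hfd : HasDerivAt f (deriv f (α θ₀)) (α θ₀) := hdiffAt.hasDerivAt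
    have hαd := hαderiv θ₀ hθ₀
    have h1 : HasDerivAt (fun θ => f (α θ)) (deriv f (α θ₀) * ((f (α θ₀))⁻¹ * I)) θ₀ :=
      hfd.comp θ₀ hαd
    have h2 := (h1.mul hαd).div_const I
    refine (h2.congr_deriv ?_ : HasDerivAt D _ θ₀)
    have hfne : f (α θ₀) ≠ 0 := ne_of_gt hfx0
    field_simp
  -- antitonicity of the derivative expression
  have hanti : AntitoneOn (deriv D) (Set.Ioo (0:ℝ) 1) := by
    intro θ₁ h1 θ₂ h2 h12
    rcases eq_or_lt_of_le h12 with rfl | hlt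
    · exact le_rfl
    rw [(hDderiv θ₁ h1).deriv, (hDderiv θ₂ h2).deriv]
    have hx1pos : 0 < α θ₁ := hαpos _ h1.1 h1.2.le
    have hx2pos : 0 < α θ₂ := hαpos _ h2.1 h2.2.le
    have hx1lt : α θ₁ < a := hαlt _ h1.1.le h1.2
    have hx2lt : α θ₂ < a := hαlt _ h2.1.le h2.2
    have hxx : α θ₁ < α θ₂ := hαmono θ₁ ⟨h1.1.le, h1.2.le⟩ θ₂ ⟨h2.1.le, h2.2.le⟩ hlt
    have hf1 : 0 < f (α θ₁) := hfpos _ hx1pos.le hx1lt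
    have hf2 : 0 < f (α θ₂) := hfpos _ hx2pos.le hx2lt
    have hd : ∀ x : ℝ, 0 < x → x < a →
        HasDerivAt (fun y => Real.log (f y)) (deriv f x / f x) x := by
      intro x hx hxa
      exact (((hf.differentiableOn one_ne_zero).differentiableAt
        (Ici_mem_nhds hx)).hasDerivAt).log (ne_of_gt (hfpos x hx.le hxa))
    have hmem1 : α θ₁ ∈ Set.Ico 0 a := ⟨hx1pos.le, hx1lt⟩
    have hmem2 : α θ₂ ∈ Set.Ico 0 a := ⟨hx2pos.le, hx2lt⟩
    have hq21 : deriv f (α θ₂) / f (α θ₂) ≤ deriv f (α θ₁) / f (α θ₁) := by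
      have hb := hlogconc.le_slope_of_hasDerivAt hmem1 hmem2 hxx (hd _ hx2pos hx2lt)
      have hc := hlogconc.slope_le_of_hasDerivAt hmem1 hmem2 hxx (hd _ hx1pos hx1lt)
      linarith
    have hq1np : deriv f (α θ₁) / f (α θ₁) ≤ 0 := by
      have h0mem : (0:ℝ) ∈ Set.Ico 0 a := ⟨le_rfl, ha_pos⟩
      have hb := hlogconc.le_slope_of_hasDerivAt h0mem hmem1 hx1pos (hd _ hx1pos hx1lt)
      have hslope : slope (fun x => Real.log (f x)) 0 (α θ₁) ≤ 0 := by
        rw [slope_def_field]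
        apply div_nonpos_of_nonpos_of_nonneg
        · have hle : f (α θ₁) ≤ f 0 := hdecr h0mem hmem1 hx1pos.le
          have := Real.log_le_log hf1 hle
          linarith
        · linarith
      linarith
    have e1 : α θ₂ * (deriv f (α θ₂) / f (α θ₂)) ≤ α θ₂ * (deriv f (α θ₁) / f (α θ₁)) :=
      mul_le_mul_of_nonneg_left hq21 hx2pos.le
    have e2 : α θ₂ * (deriv f (α θ₁) / f (α θ₁)) ≤ α θ₁ * (deriv f (α θ₁) / f (α θ₁)) := by
      nlinarith [mul_nonneg (sub_nonneg.2 hxx.le) (neg_nonneg.2 hq1np)]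
    rw [mul_div_assoc, mul_div_assoc]
    linarith
  have hF0 : F 0 = 0 := by
    show (∫ t in Set.Ioc (0:ℝ) 0, f t) = 0
    rw [Set.Ioc_self, MeasureTheory.setIntegral_empty]
  have hα0 : α 0 = 0 := by
    rcases (hαnn 0 ⟨le_rfl, zero_le_one⟩).lt_or_eq with h | h
    · exfalso
      have hF0' := hαF 0 ⟨le_rfl, zero_le_one⟩
      rw [zero_mul] at hF0'
      have hy0 : 0 < min (α 0) a := lt_min h ha_pos
      have hstep := hFstrict 0 (min (α 0) a) le_rfl hy0 (min_le_right _ _)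
      have hm := hFmono (min (α 0) a) (α 0) hy0.le (min_le_left _ _)
      rw [hF0] at hstep
      linarith
    · exact h.symm
  have hD1ge : a ≤ α 1 := by
    by_contra h
    push_neg at h
    have hF1 := hαF 1 ⟨zero_le_one, le_rfl⟩
    have hlt := hFstrict (α 1) a (hαnn 1 ⟨zero_le_one, le_rfl⟩) h le_rfl
    rw [hFa a le_rfl] at hlt
    rw [one_mul] at hF1
    linarith
  -- continuity of D on Icc 0 1
  have hDcont : ContinuousOn D (Set.Icc (0:ℝ) 1) := by
    intro θ₀ hθ₀
    rcases eq_or_lt_of_le hθ₀.1 with h0 | h0pos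
    · -- θ₀ = 0
      subst h0
      have hD0 : D 0 = 0 := by
        show f (α 0) * α 0 / I = 0
        rw [hα0]; simp
      rw [Metric.continuousWithinAt_iff]
      intro ε hε
      have hf0 : 0 < f 0 := hfpos 0 le_rfl ha_pos
      set x₁ : ℝ := min (ε * I / (f 0 + 1)) (a / 2) with hx₁def
      have hx₁pos : 0 < x₁ := lt_min (by positivity) (by linarith)
      have hx₁a : x₁ < a := lt_of_le_of_lt (min_le_right _ _) (by linarith)
      have hFx₁pos : 0 < F x₁ := by
        have h := hFstrict 0 x₁ le_rfl hx₁pos hx₁a.le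
        rw [hF0] at h; exact h
      refine ⟨F x₁ / I, div_pos hFx₁pos hIpos, ?_⟩
      intro θ hθm hdist
      rw [Real.dist_eq] at hdist ⊢
      have hθ0 : 0 ≤ θ := hθm.1
      have habs : θ - 0 < F x₁ / I := (abs_lt.1 hdist).2
      have hθI : θ * I < F x₁ := by
        have := (lt_div_iff₀ hIpos).1 (by linarith : θ < F x₁ / I)
        linarith
      have hαθ : α θ < x₁ := by
        by_contra h
        push_neg at h
        have hm := hFmono x₁ (α θ) hx₁pos.le h
        rw [hαF θ hθm] at hm
        linarith
      have hαnn' : 0 ≤ α θ := hαnn θ hθm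
      have hfb : f (α θ) ≤ f 0 :=
        hdecr ⟨le_rfl, ha_pos⟩ ⟨hαnn', lt_trans hαθ hx₁a⟩ hαnn'
      have hnn : 0 ≤ f (α θ) * α θ / I :=
        div_nonneg (mul_nonneg (hfnn _ hαnn') hαnn') hIpos.le
      have hx₁le : x₁ ≤ ε * I / (f 0 + 1) := min_le_left _ _
      have hkey : f 0 * x₁ < ε * I := by
        have h1 : x₁ * (f 0 + 1) ≤ ε * I := by
          rw [← le_div_iff₀ (by positivity : (0:ℝ) < f 0 + 1)]
          exact hx₁le
        nlinarith
      have hD0' : D 0 = 0 := hD0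
      rw [hD0', sub_zero]
      show |f (α θ) * α θ / I| < ε
      rw [abs_of_nonneg hnn, div_lt_iff₀ hIpos]
      nlinarith [mul_le_mul hfb hαθ.le hαnn' hf0.le]
    rcases eq_or_lt_of_le hθ₀.2 with h1 | h1lt
    · -- θ₀ = 1
      subst h1
      have hD1v : D 1 = 0 := by
        show f (α 1) * α 1 / I = 0
        rw [hfz (α 1) hD1ge]; simp
      rw [Metric.continuousWithinAt_iff]
      intro ε hε
      have hfa0 : f a = 0 := hfz a le_rfl
      have hconta : ContinuousAt f a := hcont.continuousAt (Ici_mem_nhds ha_pos)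
      rw [Metric.continuousAt_iff] at hconta
      obtain ⟨δ', hδ'pos, hδ'⟩ := hconta (ε * I / a) (by positivity)
      set y : ℝ := max (a - δ' / 2) (a / 2) with hydef
      have hy0 : 0 ≤ y := le_trans (by linarith) (le_max_right _ _)
      have hya : y < a := max_lt (by linarith) (by linarith)
      have hay : a - y ≤ δ' / 2 := by
        have := le_max_left (a - δ' / 2) (a / 2)
        have h2 : a - δ' / 2 ≤ y := this
        linarith
      have hFy : F y < I := by
        have h := hFstrict y a hy0 hya le_rfl
        rw [hFa a le_rfl] at h; exact h
      refine ⟨(I - F y) / I, div_pos (by linarith) hIpos, ?_⟩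
      intro θ hθm hdist
      rw [Real.dist_eq] at hdist ⊢
      rw [hD1v, sub_zero]
      have hαnn' : 0 ≤ α θ := hαnn θ hθm
      have hnnD : 0 ≤ f (α θ) * α θ / I :=
        div_nonneg (mul_nonneg (hfnn _ hαnn') hαnn') hIpos.le
      show |f (α θ) * α θ / I| < ε
      rw [abs_of_nonneg hnnD]
      have habs := (abs_lt.1 hdist).1
      have hdd : ((I - F y) / I) * I = I - F y := div_mul_cancel₀ _ hIne
      have hθIlb : F y < θ * I := by
        have h2 : (1 - θ) < (I - F y) / I := by linarith
        have h3 : (1 - θ) * I < ((I - F y) / I) * I := mul_lt_mul_of_pos_right h2 hIpos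
        rw [hdd] at h3
        nlinarith
      have hαgt : y < α θ := by
        by_contra h
        push_neg at h
        have hm := hFmono (α θ) y hαnn' h
        rw [hαF θ hθm] at hm
        linarith
      rcases le_or_gt a (α θ) with hcase | hcase
      · rw [hfz (α θ) hcase]
        simpa using hε
      · have hdist2 : dist (α θ) a < δ' := by
          rw [Real.dist_eq, abs_of_nonpos (by linarith)]
          linarith
        have hfb := hδ' hdist2
        rw [Real.dist_eq, hfa0, sub_zero, abs_of_nonneg (hfnn _ hαnn')] at hfb
        rw [div_lt_iff₀ hIpos]
        have hcc : ε * I / a * a = ε * I := div_mul_cancel₀ _ (ne_of_gt ha_pos)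
        nlinarith [mul_lt_mul_of_pos_right hfb ha_pos,
          mul_le_mul_of_nonneg_left hcase.le (hfnn _ hαnn')]
    · exact ((hDderiv θ₀ ⟨h0pos, h1lt⟩).continuousAt).continuousWithinAt
  have hDdiff : DifferentiableOn ℝ D (interior (Set.Icc (0:ℝ) 1)) := by
    rw [interior_Icc]
    intro θ hθ
    exact ((hDderiv θ hθ).differentiableAt).differentiableWithinAt
  have := AntitoneOn.concaveOn_of_deriv (convex_Icc (0:ℝ) 1) hDcont hDdiff
    (by rw [interior_Icc]; exact hanti)
  exact this
end

section
/- Let −∞ < a < b ≤ ∞ and let μ be a probability measure supported on (a, b) with continuous density f on (a, b), and let c ∈ (a, b). If f is non-decreasing on (a, b), then μ*((a, c)) ≥ μ((a, c)). If f is non-increasing on (a, b), then μ*((a, c)) ≤ μ((a, c)). -/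
open MeasureTheory Filter Set Topology

/-- The ε-dilation of a Borel set `A ⊆ ℝ`. -/
def dil (A : Set ℝ) (ε : ℝ) : Set ℝ :=
  A ∪ {x : ℝ | ∃ y : ℝ,
    volume {t : ℝ | t ∈ Set.Icc (0:ℝ) 1 ∧ x + t * (y - x) ∈ A} > ENNReal.ofReal (1 - ε)}

/-- The dilation area `μ*(A) = liminf_{ε→0⁺} (μ(A_ε) − μ(A))/ε`. -/
noncomputable def dilArea (μ : Measure ℝ) (A : Set ℝ) : ℝ :=
  Filter.liminf (fun ε : ℝ => ((μ (dil A ε)).toReal - (μ A).toReal) / ε)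
    (nhdsWithin 0 (Set.Ioi 0))

private lemma vol_le_of_subset_Ioc {T : Set ℝ} {p q w : ℝ} (hT : T ⊆ Set.Ioc p q)
    (h : q - p ≤ w) : volume T ≤ ENNReal.ofReal w :=
  le_trans (measure_mono hT) (by rw [Real.volume_Ioc]; exact ENNReal.ofReal_le_ofReal h)

private lemma dil_superset {a c : ℝ} (hc : a < c) {ε : ℝ} (hε : 0 < ε) :
    Set.Ico c (c + ε * (c - a)) ⊆ dil (Set.Ioo a c) ε := by
  intro x hx
  obtain ⟨hx1, hx2⟩ := hx
  have hxa : a < x := lt_of_lt_of_le hc hx1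
  have hxa' : 0 < x - a := by linarith
  right
  refine ⟨a, ?_⟩
  set r := (x - c) / (x - a) with hr
  have hr0 : 0 ≤ r := div_nonneg (by linarith) hxa'.le
  have hrε : r < ε := by
    rw [hr, div_lt_iff₀ hxa']
    nlinarith
  have hr1 : r < 1 := by
    rw [hr, div_lt_one hxa']
    linarith
  have hsub : Set.Ioo r 1 ⊆
      {t : ℝ | t ∈ Set.Icc (0:ℝ) 1 ∧ x + t * (a - x) ∈ Set.Ioo a c} := by
    rintro t ⟨ht1, ht2⟩
    have hrt := (div_lt_iff₀ hxa').mp ht1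
    refine ⟨⟨le_of_lt (lt_of_le_of_lt hr0 ht1), ht2.le⟩, by nlinarith, by nlinarith⟩
  calc ENNReal.ofReal (1 - ε) < ENNReal.ofReal (1 - r) := by
        exact (ENNReal.ofReal_lt_ofReal_iff (by linarith)).mpr (by linarith)
    _ = volume (Set.Ioo r 1) := (Real.volume_Ioo).symm
    _ ≤ _ := measure_mono hsub

private lemma dil_subset {a c : ℝ} (hc : a < c) {ε : ℝ} (hε : 0 < ε) (hε1 : ε < 1) :
    dil (Set.Ioo a c) ε ⊆
      Set.Ioo (a - ε * (c - a) / (1 - ε)) (c + ε * (c - a) / (1 - ε)) := by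
  set δ := ε * (c - a) / (1 - ε) with hδdef
  have h1ε : 0 < 1 - ε := by linarith
  have hδ : 0 < δ := div_pos (mul_pos hε (by linarith)) h1ε
  have hδε : δ * (1 - ε) = ε * (c - a) := div_mul_cancel₀ _ h1ε.ne'
  intro x hx
  rcases hx with hx | ⟨y, hy⟩
  · exact ⟨by linarith [hx.1], by linarith [hx.2]⟩
  by_contra hcon
  rw [Set.mem_Ioo, not_and_or, not_lt, not_lt] at hcon
  refine absurd hy (not_lt.mpr ?_)
  rcases hcon with hxl | hxr
  · -- x ≤ a - δ
    rcases le_or_gt y x with h' | h'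
    · have hemp : {t : ℝ | t ∈ Set.Icc (0:ℝ) 1 ∧ x + t * (y - x) ∈ Set.Ioo a c} = ∅ := by
        ext t
        simp only [Set.mem_setOf_eq, Set.mem_empty_iff_false, iff_false, not_and]
        rintro ⟨ht0, ht1⟩ ⟨hp1, hp2⟩
        nlinarith
      rw [hemp]; simp
    · set s := y - x with hs
      have hs0 : 0 < s := by simp [hs]; linarith
      have hsub : {t : ℝ | t ∈ Set.Icc (0:ℝ) 1 ∧ x + t * (y - x) ∈ Set.Ioo a c} ⊆
          Set.Ioc ((a - x)/s) (min ((c - x)/s) 1) := by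
        rintro t ⟨⟨ht0, ht1⟩, hp1, hp2⟩
        constructor
        · rw [div_lt_iff₀ hs0]; nlinarith
        · exact le_min (le_of_lt ((lt_div_iff₀ hs0).mpr (by nlinarith))) ht1
      refine vol_le_of_subset_Ioc hsub ?_
      rcases le_or_gt (c - a) (s * (1 - ε)) with h2 | h2
      · have : (c - x)/s - (a - x)/s ≤ 1 - ε := by
          rw [div_sub_div_same, div_le_iff₀ hs0]; nlinarith
        have := min_le_left ((c - x)/s) 1
        linarith
      · have hεs : ε * s < δ := by nlinarith
        have h3 : ε < (a - x)/s := (lt_div_iff₀ hs0).mpr (by nlinarith)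
        have := min_le_right ((c - x)/s) 1
        linarith
  · -- c + δ ≤ x
    rcases le_or_gt x y with h' | h'
    · have hemp : {t : ℝ | t ∈ Set.Icc (0:ℝ) 1 ∧ x + t * (y - x) ∈ Set.Ioo a c} = ∅ := by
        ext t
        simp only [Set.mem_setOf_eq, Set.mem_empty_iff_false, iff_false, not_and]
        rintro ⟨ht0, ht1⟩ ⟨hp1, hp2⟩
        nlinarith
      rw [hemp]; simp
    · set s := x - y with hs
      have hs0 : 0 < s := by simp [hs]; linarith
      have hsub : {t : ℝ | t ∈ Set.Icc (0:ℝ) 1 ∧ x + t * (y - x) ∈ Set.Ioo a c} ⊆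
          Set.Ioc ((x - c)/s) (min ((x - a)/s) 1) := by
        rintro t ⟨⟨ht0, ht1⟩, hp1, hp2⟩
        constructor
        · rw [div_lt_iff₀ hs0]; nlinarith
        · exact le_min (le_of_lt ((lt_div_iff₀ hs0).mpr (by nlinarith))) ht1
      refine vol_le_of_subset_Ioc hsub ?_
      rcases le_or_gt (c - a) (s * (1 - ε)) with h2 | h2
      · have : (x - a)/s - (x - c)/s ≤ 1 - ε := by
          rw [div_sub_div_same, div_le_iff₀ hs0]; nlinarith
        have := min_le_left ((x - a)/s) 1
        linarith
      · have hεs : ε * s < δ := by nlinarith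
        have h3 : ε < (x - c)/s := (lt_div_iff₀ hs0).mpr (by nlinarith)
        have := min_le_right ((x - a)/s) 1
        linarith

private lemma mu_Ioo_le {h : ℝ → ENNReal} {u v : ℝ} {C : ENNReal}
    (hb : ∀ x ∈ Set.Ioo u v, h x ≤ C) :
    (volume.withDensity h) (Set.Ioo u v) ≤ C * ENNReal.ofReal (v - u) := by
  rw [withDensity_apply _ measurableSet_Ioo]
  calc ∫⁻ x in Set.Ioo u v, h x ≤ ∫⁻ _ in Set.Ioo u v, C :=
      setLIntegral_mono' measurableSet_Ioo hb
    _ = C * volume (Set.Ioo u v) := setLIntegral_const _ _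
    _ = C * ENNReal.ofReal (v - u) := by rw [Real.volume_Ioo]

private lemma mu_Ioo_ge {h : ℝ → ENNReal} {u v : ℝ} {C : ENNReal}
    (hb : ∀ x ∈ Set.Ioo u v, C ≤ h x) :
    C * ENNReal.ofReal (v - u) ≤ (volume.withDensity h) (Set.Ioo u v) := by
  rw [withDensity_apply _ measurableSet_Ioo]
  calc C * ENNReal.ofReal (v - u) = C * volume (Set.Ioo u v) := by rw [Real.volume_Ioo]
    _ = ∫⁻ _ in Set.Ioo u v, C := (setLIntegral_const _ _).symm
    _ ≤ ∫⁻ x in Set.Ioo u v, h x := setLIntegral_mono' measurableSet_Ioo hb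

theorem stmt7
    (a : ℝ) (b : EReal) (hab : (a : EReal) < b)
    (f : ℝ → ℝ) (hf : ContinuousOn f {x : ℝ | a < x ∧ (x : EReal) < b})
    (hf0 : ∀ x : ℝ, a < x → (x : EReal) < b → 0 ≤ f x)
    (μ : Measure ℝ) [IsProbabilityMeasure μ]
    (hμ : μ = volume.withDensity
      ({x : ℝ | a < x ∧ (x : EReal) < b}.indicator fun x => ENNReal.ofReal (f x)))
    (c : ℝ) (hc1 : a < c) (hc2 : (c : EReal) < b) :
    (MonotoneOn f {x : ℝ | a < x ∧ (x : EReal) < b} →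
      dilArea μ (Set.Ioo a c) ≥ (μ (Set.Ioo a c)).toReal) ∧
    (AntitoneOn f {x : ℝ | a < x ∧ (x : EReal) < b} →
      dilArea μ (Set.Ioo a c) ≤ (μ (Set.Ioo a c)).toReal) := by
  set S : Set ℝ := {x : ℝ | a < x ∧ (x : EReal) < b} with hS
  set g : ℝ → ENNReal := S.indicator fun x => ENNReal.ofReal (f x) with hgdef
  set u : ℝ → ℝ := fun ε => ((μ (dil (Set.Ioo a c) ε)).toReal - (μ (Set.Ioo a c)).toReal) / ε
    with hu
  have hdA : ∀ B : Set ℝ, dilArea μ B =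
      Filter.liminf (fun ε : ℝ => ((μ (dil B ε)).toReal - (μ B).toReal) / ε) (𝓝[>] 0) :=
    fun B => rfl
  have hca : (0:ℝ) < c - a := by linarith
  have hcS : c ∈ S := ⟨hc1, hc2⟩
  have hfc0 : 0 ≤ f c := hf0 c hc1 hc2
  obtain ⟨b₀, hb₀1, hb₀2⟩ : ∃ b₀ : ℝ, c < b₀ ∧ ((b₀ : ℝ) : EReal) < b := by
    rcases EReal.lt_iff_exists_real_btwn.mp hc2 with ⟨z, hz1, hz2⟩
    exact ⟨z, by exact_mod_cast hz1, hz2⟩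
  have hIooS : ∀ {p q : ℝ}, a ≤ p → q ≤ b₀ → Set.Ioo p q ⊆ S := by
    intro p q hp hq x hx
    refine ⟨lt_of_le_of_lt hp hx.1, lt_trans ?_ hb₀2⟩
    exact_mod_cast lt_of_lt_of_le hx.2 hq
  have hAS : Set.Ioo a c ⊆ S := hIooS le_rfl hb₀1.le
  -- μ of the singleton {c} vanishes
  have hμc : μ ({c} : Set ℝ) = 0 := by
    rw [hμ, withDensity_apply _ (measurableSet_singleton c)]
    exact setLIntegral_measure_zero _ _ (by simp)
  -- the key upper bound
  have hub : ∀ ε : ℝ, 0 < ε → ε < 1 → ∀ C' : ℝ, 0 ≤ C' →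
      (∀ x ∈ Set.Ioo c (c + ε * (c - a) / (1 - ε)), g x ≤ ENNReal.ofReal C') →
      u ε ≤ C' * (c - a) / (1 - ε) := by
    intro ε hε hε1 C' hC' hgb
    set δ := ε * (c - a) / (1 - ε) with hδdef
    have h1ε : (0:ℝ) < 1 - ε := by linarith
    have hδ0 : 0 < δ := div_pos (mul_pos hε hca) h1ε
    have hIa : μ (Set.Ioc (a - δ) a) = 0 := by
      rw [hμ, withDensity_apply _ measurableSet_Ioc,
        setLIntegral_congr_fun measurableSet_Ioc (fun x hx =>
          Set.indicator_of_notMem (fun hxS => absurd hxS.1 (not_lt.mpr hx.2)) _)]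
      simp
    have hIc : μ (Set.Ioo c (c + δ)) ≤ ENNReal.ofReal C' * ENNReal.ofReal δ := by
      have h2 := mu_Ioo_le hgb
      rw [add_sub_cancel_left] at h2
      rw [hμ]
      exact h2
    have hsplit : Set.Ioo (a - δ) (c + δ) ⊆
        (Set.Ioc (a - δ) a ∪ Set.Ioo a c) ∪ (({c} : Set ℝ) ∪ Set.Ioo c (c + δ)) := by
      intro x hx
      rcases le_or_gt x a with h | h
      · exact Or.inl (Or.inl ⟨hx.1, h⟩)
      rcases lt_trichotomy x c with h' | h' | h'
      · exact Or.inl (Or.inr ⟨h, h'⟩)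
      · exact Or.inr (Or.inl (by simp [h']))
      · exact Or.inr (Or.inr ⟨h', hx.2⟩)
    have hmulfin : ENNReal.ofReal C' * ENNReal.ofReal δ ≠ ⊤ :=
      ENNReal.mul_ne_top ENNReal.ofReal_ne_top ENNReal.ofReal_ne_top
    have hkey : μ (dil (Set.Ioo a c) ε) ≤
        μ (Set.Ioo a c) + ENNReal.ofReal C' * ENNReal.ofReal δ := by
      calc μ (dil (Set.Ioo a c) ε) ≤ μ (Set.Ioo (a - δ) (c + δ)) :=
            measure_mono (dil_subset hc1 hε hε1)
        _ ≤ μ (Set.Ioc (a - δ) a ∪ Set.Ioo a c) + μ (({c} : Set ℝ) ∪ Set.Ioo c (c + δ)) :=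
            le_trans (measure_mono hsplit) (measure_union_le _ _)
        _ ≤ (μ (Set.Ioc (a - δ) a) + μ (Set.Ioo a c)) +
            (μ ({c} : Set ℝ) + μ (Set.Ioo c (c + δ))) :=
            add_le_add (measure_union_le _ _) (measure_union_le _ _)
        _ ≤ (0 + μ (Set.Ioo a c)) + (0 + ENNReal.ofReal C' * ENNReal.ofReal δ) := by
            rw [hIa, hμc]; exact add_le_add le_rfl (add_le_add le_rfl hIc)
        _ = μ (Set.Ioo a c) + ENNReal.ofReal C' * ENNReal.ofReal δ := by
            rw [zero_add, zero_add]
    have hkey' : (μ (dil (Set.Ioo a c) ε)).toReal ≤ (μ (Set.Ioo a c)).toReal + C' * δ := by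
      have h2 := ENNReal.toReal_mono
        (ENNReal.add_ne_top.mpr ⟨measure_ne_top μ _, hmulfin⟩) hkey
      rwa [ENNReal.toReal_add (measure_ne_top μ _) hmulfin, ENNReal.toReal_mul,
        ENNReal.toReal_ofReal hC', ENNReal.toReal_ofReal hδ0.le] at h2
    rw [hu]
    rw [div_le_iff₀ hε]
    have heq : C' * (c - a) / (1 - ε) * ε = C' * δ := by rw [hδdef]; ring
    linarith
  have hSopen : IsOpen S := by
    have h2 : S = Set.Ioi a ∩ ((fun x : ℝ => (x : EReal)) ⁻¹' Set.Iio b) := rfl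
    rw [h2]
    exact isOpen_Ioi.inter (isOpen_Iio.preimage continuous_coe_real_ereal)
  have hcont : ContinuousAt f c := hf.continuousAt (hSopen.mem_nhds hcS)
  constructor
  · -- monotone case
    intro hmono
    have hfin2 : ENNReal.ofReal (f c) * ENNReal.ofReal (c - a) ≠ ⊤ :=
      ENNReal.mul_ne_top ENNReal.ofReal_ne_top ENNReal.ofReal_ne_top
    have hmle : μ (Set.Ioo a c) ≤ ENNReal.ofReal (f c) * ENNReal.ofReal (c - a) := by
      rw [hμ]
      refine mu_Ioo_le fun x hx => ?_
      rw [hgdef, Set.indicator_of_mem (hAS hx)]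
      exact ENNReal.ofReal_le_ofReal (hmono (hAS hx) hcS hx.2.le)
    have h1 : (μ (Set.Ioo a c)).toReal ≤ f c * (c - a) := by
      have h2 := ENNReal.toReal_mono hfin2 hmle
      rwa [ENNReal.toReal_mul, ENNReal.toReal_ofReal hfc0, ENNReal.toReal_ofReal hca.le] at h2
    have hlow : ∀ᶠ ε in 𝓝[>] (0:ℝ), f c * (c - a) ≤ u ε := by
      filter_upwards [Ioo_mem_nhdsGT_of_mem (Set.left_mem_Ico.mpr
        (lt_min one_pos (div_pos (by linarith : (0:ℝ) < b₀ - c) hca)))] with ε hε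
      obtain ⟨hε0, hεm⟩ := hε
      have hε1 : ε < 1 := lt_of_lt_of_le hεm (min_le_left _ _)
      have hεb : ε * (c - a) < b₀ - c := by
        have h2 := lt_of_lt_of_le hεm (min_le_right _ _)
        calc ε * (c - a) < ((b₀ - c) / (c - a)) * (c - a) := by nlinarith
          _ = b₀ - c := div_mul_cancel₀ _ hca.ne'
      set d := ε * (c - a) with hd
      have hd0 : 0 < d := mul_pos hε0 hca
      have hsub2 : Set.Ioo a c ∪ Set.Ioo c (c + d) ⊆ dil (Set.Ioo a c) ε :=
        Set.union_subset Set.subset_union_left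
          (Set.Ioo_subset_Ico_self.trans (dil_superset hc1 hε0))
      have hdisj : Disjoint (Set.Ioo a c) (Set.Ioo c (c + d)) :=
        Set.disjoint_left.mpr fun x h1 h2 => absurd h1.2 (not_lt.mpr h2.1.le)
      have hge : ENNReal.ofReal (f c) * ENNReal.ofReal d ≤ μ (Set.Ioo c (c + d)) := by
        have h2 : ∀ x ∈ Set.Ioo c (c + d), ENNReal.ofReal (f c) ≤ g x := by
          intro x hx
          have hxS : x ∈ S := hIooS hc1.le (by linarith) hx
          rw [hgdef, Set.indicator_of_mem hxS]
          exact ENNReal.ofReal_le_ofReal (hmono hcS hxS hx.1.le)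
        have h3 := mu_Ioo_ge h2
        rw [add_sub_cancel_left] at h3
        rw [hμ]; exact h3
      have hkey : μ (Set.Ioo a c) + ENNReal.ofReal (f c) * ENNReal.ofReal d ≤
          μ (dil (Set.Ioo a c) ε) := by
        calc μ (Set.Ioo a c) + ENNReal.ofReal (f c) * ENNReal.ofReal d
            ≤ μ (Set.Ioo a c) + μ (Set.Ioo c (c + d)) := add_le_add le_rfl hge
          _ = μ (Set.Ioo a c ∪ Set.Ioo c (c + d)) :=
              (measure_union hdisj measurableSet_Ioo).symm
          _ ≤ μ (dil (Set.Ioo a c) ε) := measure_mono hsub2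
      have hfin3 : ENNReal.ofReal (f c) * ENNReal.ofReal d ≠ ⊤ :=
        ENNReal.mul_ne_top ENNReal.ofReal_ne_top ENNReal.ofReal_ne_top
      have htr := ENNReal.toReal_mono (measure_ne_top μ _) hkey
      rw [ENNReal.toReal_add (measure_ne_top μ _) hfin3, ENNReal.toReal_mul,
        ENNReal.toReal_ofReal hfc0, ENNReal.toReal_ofReal hd0.le] at htr
      rw [hu]
      rw [le_div_iff₀ hε0]
      have h4 : f c * (c - a) * ε = f c * d := by rw [hd]; ring
      linarith
    have hbd : ∀ᶠ ε in 𝓝[>] (0:ℝ), u ε ≤ (f c + 1) * (c - a) * 2 := by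
      obtain ⟨η, hη0, hηb⟩ := Metric.mem_nhds_iff.mp (hcont (Iio_mem_nhds (lt_add_one (f c))))
      filter_upwards [Ioo_mem_nhdsGT_of_mem (Set.left_mem_Ico.mpr
        (lt_min (by norm_num : (0:ℝ) < 1/2) (div_pos hη0 (by linarith : (0:ℝ) < 2 * (c - a)))))]
        with ε hε
      obtain ⟨hε0, hεm⟩ := hε
      have hεh : ε < 1/2 := lt_of_lt_of_le hεm (min_le_left _ _)
      have hε1 : ε < 1 := by linarith
      have h1ε : (0:ℝ) < 1 - ε := by linarith
      have hεη : ε < η / (2 * (c - a)) := lt_of_lt_of_le hεm (min_le_right _ _)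
      have hδη : ε * (c - a) / (1 - ε) < η := by
        rw [div_lt_iff₀ h1ε]
        have h2 : ε * (2 * (c - a)) < η := (lt_div_iff₀ (by linarith)).mp hεη
        nlinarith
      have h3 : u ε ≤ (f c + 1) * (c - a) / (1 - ε) := by
        refine hub ε hε0 hε1 (f c + 1) (by linarith) fun x hx => ?_
        by_cases hxS : x ∈ S
        · rw [hgdef, Set.indicator_of_mem hxS]
          refine ENNReal.ofReal_le_ofReal ?_
          have hball : x ∈ Metric.ball c η := by
            rw [Metric.mem_ball, Real.dist_eq,
              abs_of_pos (by linarith [hx.1] : (0:ℝ) < x - c)]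
            linarith [hx.2, hδη]
          exact (hηb hball).le
        · rw [hgdef, Set.indicator_of_notMem hxS]
          exact zero_le
      calc u ε ≤ (f c + 1) * (c - a) / (1 - ε) := h3
        _ ≤ (f c + 1) * (c - a) * 2 := by
          rw [div_le_iff₀ h1ε]
          have hK : (0:ℝ) < (f c + 1) * (c - a) := mul_pos (by linarith) hca
          nlinarith [mul_nonneg hK.le (by linarith : (0:ℝ) ≤ 1 - 2 * ε)]
    have hcob : IsCoboundedUnder (· ≥ ·) (𝓝[>] (0:ℝ)) u :=
      IsBoundedUnder.isCoboundedUnder_ge ⟨(f c + 1) * (c - a) * 2, eventually_map.mpr hbd⟩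
    rw [ge_iff_le, hdA, ← hu]
    calc (μ (Set.Ioo a c)).toReal ≤ f c * (c - a) := h1
      _ ≤ liminf u (𝓝[>] 0) := le_liminf_of_le hcob hlow
  · -- antitone case
    intro hanti
    have h1 : f c * (c - a) ≤ (μ (Set.Ioo a c)).toReal := by
      have hmge : ENNReal.ofReal (f c) * ENNReal.ofReal (c - a) ≤ μ (Set.Ioo a c) := by
        rw [hμ]
        refine mu_Ioo_ge fun x hx => ?_
        rw [hgdef, Set.indicator_of_mem (hAS hx)]
        exact ENNReal.ofReal_le_ofReal (hanti (hAS hx) hcS hx.2.le)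
      have h2 := ENNReal.toReal_mono (measure_ne_top μ _) hmge
      rwa [ENNReal.toReal_mul, ENNReal.toReal_ofReal hfc0, ENNReal.toReal_ofReal hca.le] at h2
    set v : ℝ → ℝ := fun ε => f c * (c - a) / (1 - ε) with hv
    have huv : ∀ᶠ ε in 𝓝[>] (0:ℝ), u ε ≤ v ε := by
      filter_upwards [Ioo_mem_nhdsGT_of_mem (Set.left_mem_Ico.mpr one_pos)] with ε hε
      refine hub ε hε.1 hε.2 (f c) hfc0 fun x hx => ?_
      by_cases hxS : x ∈ S
      · rw [hgdef, Set.indicator_of_mem hxS]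
        exact ENNReal.ofReal_le_ofReal (hanti hcS hxS hx.1.le)
      · rw [hgdef, Set.indicator_of_notMem hxS]
        exact zero_le
    have hu0 : ∀ᶠ ε in 𝓝[>] (0:ℝ), 0 ≤ u ε := by
      filter_upwards [self_mem_nhdsWithin] with ε hε
      have h2 : μ (Set.Ioo a c) ≤ μ (dil (Set.Ioo a c) ε) :=
        measure_mono Set.subset_union_left
      have h3 := ENNReal.toReal_mono (measure_ne_top μ _) h2
      rw [hu]
      exact div_nonneg (by linarith) (le_of_lt hε)
    have htv : Tendsto v (𝓝[>] (0:ℝ)) (𝓝 (f c * (c - a))) := by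
      have h2 : ContinuousAt (fun ε : ℝ => f c * (c - a) / (1 - ε)) 0 :=
        continuousAt_const.div (continuous_const.sub continuous_id).continuousAt
          (by norm_num)
      have h3 := h2.tendsto
      simp only [sub_zero, div_one] at h3
      exact h3.mono_left nhdsWithin_le_nhds
    calc dilArea μ (Set.Ioo a c) = liminf u (𝓝[>] 0) := by rw [hdA, ← hu]
      _ ≤ liminf v (𝓝[>] 0) := liminf_le_liminf huv ⟨0, eventually_map.mpr hu0⟩
          htv.isBoundedUnder_le.isCoboundedUnder_ge
      _ = f c * (c - a) := htv.liminf_eq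
      _ ≤ _ := h1
end

section
/- Let −∞ < a < b ≤ ∞ and let f : [a, b) → [0, ∞) be continuously differentiable, integrable, and positive on (a, b). If the function x ↦ f'(x)(x − a)/f(x) is non-decreasing on (a, b), then for every θ ∈ (0, 1) the function x ↦ D♭(f, [a, x])(θ) is non-decreasing in x ∈ (a, b). If x ↦ f'(x)(x − a)/f(x) is non-increasing on (a, b), then for every θ ∈ (0, 1) the function x ↦ D♭(f, [a, x])(θ) is non-increasing in x ∈ (a, b). -/
open MeasureTheory Set intervalIntegral Filter Topology

namespace S8

variable {a : ℝ} {b : EReal} {f : ℝ → ℝ}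

lemma icc_subset {y : ℝ} (hy : (y : EReal) < b) :
    Icc a y ⊆ {x : ℝ | a ≤ x ∧ (x : EReal) < b} := fun t ht =>
  ⟨ht.1, lt_of_le_of_lt (show (t : EReal) ≤ (y : EReal) from by exact_mod_cast ht.2) hy⟩

lemma exists_r {y : ℝ} (hy2 : (y : EReal) < b) :
    ∃ r : ℝ, y < r ∧ Ioo a r ⊆ {x : ℝ | a < x ∧ (x : EReal) < b} := by
  obtain ⟨z, hz1, hz2⟩ := exists_between hy2
  have hzt : z ≠ ⊤ := (hz2.trans_le le_top).ne
  have hzb : z ≠ ⊥ := (lt_of_le_of_lt bot_le hz1).ne'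
  refine ⟨z.toReal, ?_, fun t ht => ⟨ht.1, ?_⟩⟩
  · have : (y : EReal) < (z.toReal : EReal) := by rwa [EReal.coe_toReal hzt hzb]
    exact_mod_cast this
  · have h1 : (t : EReal) < (z.toReal : EReal) := by exact_mod_cast ht.2
    rw [EReal.coe_toReal hzt hzb] at h1
    exact h1.trans hz2

lemma S_mem_nhds {y : ℝ} (hy1 : a < y) (hy2 : (y : EReal) < b) :
    {x : ℝ | a ≤ x ∧ (x : EReal) < b} ∈ 𝓝 y := by
  obtain ⟨r, hr1, hr2⟩ := exists_r hy2
  exact Filter.mem_of_superset (Ioo_mem_nhds hy1 hr1)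
    (fun t ht => ⟨(hr2 ht).1.le, (hr2 ht).2⟩)

lemma uds (hab : (a : EReal) < b) :
    UniqueDiffOn ℝ {x : ℝ | a ≤ x ∧ (x : EReal) < b} := by
  by_cases hb : b = ⊤
  · have : {x : ℝ | a ≤ x ∧ (x : EReal) < b} = Ici a := by
      ext x; simp [hb, lt_top_iff_ne_top]
    rw [this]; exact uniqueDiffOn_Ici a
  · have hbb : b ≠ ⊥ := (lt_of_le_of_lt bot_le hab).ne'
    have hbe : b = ((b.toReal : ℝ) : EReal) := (EReal.coe_toReal hb hbb).symm
    have : {x : ℝ | a ≤ x ∧ (x : EReal) < b} = Ico a b.toReal := by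
      ext x
      constructor
      · rintro ⟨h1, h2⟩; rw [hbe] at h2; exact ⟨h1, by exact_mod_cast h2⟩
      · rintro ⟨h1, h2⟩; exact ⟨h1, by rw [hbe]; exact_mod_cast h2⟩
    rw [this]; exact uniqueDiffOn_Ico a b.toReal

/-- Interval integrability of `f`. -/
lemma hIf (hcont : ContinuousOn f {x : ℝ | a ≤ x ∧ (x : EReal) < b})
    {y : ℝ} (hay : a ≤ y) (hyb : (y : EReal) < b) :
    IntervalIntegrable f volume a y := by
  have := hcont.mono (icc_subset hyb)
  rw [← uIcc_of_le hay] at this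
  exact this.intervalIntegrable

/-- Positivity of `F`. -/
lemma hFpos (hcont : ContinuousOn f {x : ℝ | a ≤ x ∧ (x : EReal) < b})
    (hfpos : ∀ x : ℝ, a < x → (x : EReal) < b → 0 < f x)
    {y : ℝ} (hy1 : a < y) (hy2 : (y : EReal) < b) :
    0 < ∫ t in Set.Ioc a y, f t := by
  rw [← integral_of_le hy1.le]
  apply intervalIntegral_pos_of_pos_on (hIf hcont hy1.le hy2) _ hy1
  intro x hx
  exact hfpos x hx.1
    (lt_of_le_of_lt (show (x : EReal) ≤ (y : EReal) from by exact_mod_cast hx.2.le) hy2)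

/-- Monotonicity of `F`. -/
lemma hFmono (hcont : ContinuousOn f {x : ℝ | a ≤ x ∧ (x : EReal) < b})
    (hf0 : ∀ x : ℝ, a ≤ x → (x : EReal) < b → 0 ≤ f x)
    {u v : ℝ} (hau : a ≤ u) (huv : u ≤ v) (hvb : (v : EReal) < b) :
    (∫ t in Set.Ioc a u, f t) ≤ ∫ t in Set.Ioc a v, f t := by
  rw [← integral_of_le (hau.trans huv), ← integral_of_le hau,
    ← integral_add_adjacent_intervals (hIf hcont hau
      (lt_of_le_of_lt (show (u : EReal) ≤ (v : EReal) from by exact_mod_cast huv) hvb))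
      (b := u) (c := v) ?h2]
  case h2 =>
    have h := (hcont.mono (icc_subset hvb)).mono (Icc_subset_Icc hau le_rfl)
    rw [← uIcc_of_le huv] at h
    exact h.intervalIntegrable
  have : 0 ≤ ∫ t in u..v, f t := by
    apply intervalIntegral.integral_nonneg huv
    intro x hx
    exact hf0 x (hau.trans hx.1)
      (lt_of_le_of_lt (show (x : EReal) ≤ (v : EReal) from by exact_mod_cast hx.2) hvb)
  linarith

/-- Strict monotonicity of `F`. -/
lemma hFstrict (hcont : ContinuousOn f {x : ℝ | a ≤ x ∧ (x : EReal) < b})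
    (hfpos : ∀ x : ℝ, a < x → (x : EReal) < b → 0 < f x)
    {u v : ℝ} (hau : a ≤ u) (huv : u < v) (hvb : (v : EReal) < b) :
    (∫ t in Set.Ioc a u, f t) < ∫ t in Set.Ioc a v, f t := by
  have huvb : (u : EReal) < b :=
    lt_of_le_of_lt (show (u : EReal) ≤ (v : EReal) from by exact_mod_cast huv.le) hvb
  have hII : IntervalIntegrable f volume u v := by
    have h := (hcont.mono (icc_subset hvb)).mono (Icc_subset_Icc hau le_rfl)
    rw [← uIcc_of_le huv.le] at h
    exact h.intervalIntegrable
  rw [← integral_of_le (hau.trans huv.le), ← integral_of_le hau,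
    ← integral_add_adjacent_intervals (hIf hcont hau huvb) hII]
  have : 0 < ∫ t in u..v, f t := by
    apply intervalIntegral_pos_of_pos_on hII _ huv
    intro x hx
    exact hfpos x (lt_of_le_of_lt hau hx.1)
      (lt_of_le_of_lt (show (x : EReal) ≤ (v : EReal) from by exact_mod_cast hx.2.le) hvb)
  linarith

/-- `F` has derivative `f y` at interior points. -/
lemma hFd (hcont : ContinuousOn f {x : ℝ | a ≤ x ∧ (x : EReal) < b})
    {y : ℝ} (hy1 : a < y) (hy2 : (y : EReal) < b) :
    HasDerivAt (fun u => ∫ t in Set.Ioc a u, f t) (f y) y := by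
  obtain ⟨r, hr1, hr2⟩ := exists_r hy2
  have hr2' : Ioo a r ⊆ {x : ℝ | a ≤ x ∧ (x : EReal) < b} :=
    fun t ht => ⟨(hr2 ht).1.le, (hr2 ht).2⟩
  have hmem : Ioo a r ∈ 𝓝 y := Ioo_mem_nhds hy1 hr1
  have hca : ContinuousAt f y := (hcont.mono hr2').continuousAt hmem
  have hsm : StronglyMeasurableAtFilter f (𝓝 y) volume :=
    (hcont.mono hr2').stronglyMeasurableAtFilter isOpen_Ioo y ⟨hy1, hr1⟩
  have h1 : HasDerivAt (fun u => ∫ t in a..u, f t) (f y) y :=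
    integral_hasDerivAt_right (hIf hcont hy1.le hy2) hsm hca
  refine h1.congr_of_eventuallyEq ?_
  filter_upwards [Ioi_mem_nhds hy1] with u hu
  exact (integral_of_le (le_of_lt hu)).symm

/-- `f` has derivative `deriv f y` at interior points. -/
lemma hfd (hf : ContDiffOn ℝ 1 f {x : ℝ | a ≤ x ∧ (x : EReal) < b})
    {y : ℝ} (hy1 : a < y) (hy2 : (y : EReal) < b) :
    HasDerivAt f (deriv f y) y :=
  ((hf.contDiffAt (S_mem_nhds hy1 hy2)).differentiableAt one_ne_zero).hasDerivAt

/-- Interval integrability of the derivative part. -/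
lemma hId (hab : (a : EReal) < b)
    (hf : ContDiffOn ℝ 1 f {x : ℝ | a ≤ x ∧ (x : EReal) < b})
    {y : ℝ} (hay : a ≤ y) (hyb : (y : EReal) < b) :
    IntervalIntegrable (fun t => deriv f t * (t - a)) volume a y := by
  set S := {x : ℝ | a ≤ x ∧ (x : EReal) < b} with hS
  have hw : ContinuousOn (fun t => derivWithin f S t) S :=
    hf.continuousOn_derivWithin (uds hab) le_rfl
  have hwc : ContinuousOn (fun t => derivWithin f S t * (t - a)) (Icc a y) :=
    (hw.mono (icc_subset hyb)).mul (continuousOn_id.sub continuousOn_const)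
  rw [intervalIntegrable_iff_integrableOn_Ioc_of_le hay]
  refine (hwc.integrableOn_Icc.mono_set Ioc_subset_Icc_self).congr_fun ?_ measurableSet_Ioc
  intro t ht
  have hmem : S ∈ 𝓝 t := S_mem_nhds ht.1
    (lt_of_le_of_lt (show (t : EReal) ≤ (y : EReal) from by exact_mod_cast ht.2) hyb)
  simp only [derivWithin_of_mem_nhds hmem]

/-- Integration by parts. -/
lemma hparts (hab : (a : EReal) < b)
    (hf : ContDiffOn ℝ 1 f {x : ℝ | a ≤ x ∧ (x : EReal) < b})
    {y : ℝ} (hay : a ≤ y) (hyb : (y : EReal) < b) :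
    ∫ t in a..y, (deriv f t * (t - a) + f t) = f y * (y - a) := by
  have hcont := hf.continuousOn
  have hII : IntervalIntegrable (fun t => deriv f t * (t - a) + f t) volume a y :=
    (hId hab hf hay hyb).add (hIf hcont hay hyb)
  have h := integral_eq_sub_of_hasDeriv_right_of_le hay
    (f := fun t => f t * (t - a)) (f' := fun t => deriv f t * (t - a) + f t)
    (((hcont.mono (icc_subset hyb)).mul (continuousOn_id.sub continuousOn_const)))
    (fun x hx => by
      have hd : HasDerivAt f (deriv f x) x := hfd hf hx.1
        (lt_of_le_of_lt (show (x : EReal) ≤ (y : EReal) from by exact_mod_cast hx.2.le) hyb)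
      have : HasDerivAt (fun t => f t * (t - a)) (deriv f x * (x - a) + f x * 1) x :=
        hd.mul ((hasDerivAt_id x).sub_const a)
      simpa using this.hasDerivWithinAt) hII
  simpa using h

/-- The key integral identity. -/
lemma h_eq (hab : (a : EReal) < b)
    (hf : ContDiffOn ℝ 1 f {x : ℝ | a ≤ x ∧ (x : EReal) < b})
    {y c : ℝ} (hay : a ≤ y) (hyb : (y : EReal) < b) :
    ∫ t in Set.Ioc a y, (f t * c - deriv f t * (t - a))
      = c * (∫ t in Set.Ioc a y, f t) + (∫ t in Set.Ioc a y, f t) - f y * (y - a) := by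
  have hcont := hf.continuousOn
  have hIf' := hIf hcont hay hyb
  have hId' := hId hab hf hay hyb
  have h1 : (∫ t in a..y, (f t * c - deriv f t * (t - a)))
      = (∫ t in a..y, f t * c) - ∫ t in a..y, deriv f t * (t - a) :=
    integral_sub (hIf'.mul_const c) hId'
  have h2 : (∫ t in a..y, deriv f t * (t - a)) = f y * (y - a) - ∫ t in a..y, f t := by
    rw [← hparts hab hf hay hyb, integral_add hId' hIf']; ring
  have h3 : (∫ t in a..y, f t * c) = (∫ t in a..y, f t) * c := integral_mul_const c f
  rw [← integral_of_le hay, h1, h2, h3, ← integral_of_le hay]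
  ring

/-- Derivative of `ψ`. -/
lemma psi_deriv (hab : (a : EReal) < b)
    (hf : ContDiffOn ℝ 1 f {x : ℝ | a ≤ x ∧ (x : EReal) < b})
    (hfpos : ∀ x : ℝ, a < x → (x : EReal) < b → 0 < f x)
    {y : ℝ} (hy1 : a < y) (hy2 : (y : EReal) < b) :
    HasDerivAt (fun u => f u * (u - a) / ∫ t in Set.Ioc a u, f t)
      ((f y * ∫ t in Set.Ioc a y,
          (f t * (deriv f y * (y - a) / f y) - deriv f t * (t - a)))
        / (∫ t in Set.Ioc a y, f t) ^ 2) y := by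
  have hcont := hf.continuousOn
  have hfy : 0 < f y := hfpos y hy1 hy2
  have hFy : 0 < ∫ t in Set.Ioc a y, f t := hFpos hcont hfpos hy1 hy2
  have hg : HasDerivAt (fun t => f t * (t - a)) (deriv f y * (y - a) + f y * 1) y :=
    (hfd hf hy1 hy2).mul ((hasDerivAt_id y).sub_const a)
  have hD := hg.div (hFd hcont hy1 hy2) hFy.ne'
  refine HasDerivAt.congr_deriv hD ?_
  rw [h_eq hab hf hy1.le hy2]
  field_simp


/-- ψ is monotone when φ is. -/
lemma psi_mono (hab : (a : EReal) < b)
    (hf : ContDiffOn ℝ 1 f {x : ℝ | a ≤ x ∧ (x : EReal) < b})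
    (hfpos : ∀ x : ℝ, a < x → (x : EReal) < b → 0 < f x)
    (hmono : MonotoneOn (fun x => deriv f x * (x - a) / f x) {x : ℝ | a < x ∧ (x : EReal) < b})
    {u v : ℝ} (hu : a < u) (hvb : (v : EReal) < b) (huv : u ≤ v) :
    f u * (u - a) / (∫ t in Set.Ioc a u, f t) ≤ f v * (v - a) / ∫ t in Set.Ioc a v, f t := by
  have hS : ∀ y ∈ Icc u v, a < y ∧ (y : EReal) < b := fun y hy =>
    ⟨lt_of_lt_of_le hu hy.1,
      lt_of_le_of_lt (show (y : EReal) ≤ (v : EReal) from by exact_mod_cast hy.2) hvb⟩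
  have hm : MonotoneOn (fun u => f u * (u - a) / ∫ t in Set.Ioc a u, f t) (Icc u v) := by
    apply monotoneOn_of_deriv_nonneg (convex_Icc u v)
    · intro y hy
      exact ((psi_deriv hab hf hfpos (hS y hy).1 (hS y hy).2).continuousAt).continuousWithinAt
    · rw [interior_Icc]
      intro y hy
      have h := hS y (Ioo_subset_Icc_self hy)
      exact (psi_deriv hab hf hfpos h.1 h.2).differentiableAt.differentiableWithinAt
    · rw [interior_Icc]
      intro y hy
      obtain ⟨hy1, hy2⟩ := hS y (Ioo_subset_Icc_self hy)
      rw [(psi_deriv hab hf hfpos hy1 hy2).deriv]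
      apply div_nonneg _ (sq_nonneg _)
      apply mul_nonneg (hfpos y hy1 hy2).le
      apply setIntegral_nonneg measurableSet_Ioc
      intro t ht
      have htb : (t : EReal) < b :=
        lt_of_le_of_lt (show (t : EReal) ≤ (y : EReal) from by exact_mod_cast ht.2) hy2
      have hft := hfpos t ht.1 htb
      have hc := hmono (Set.mem_setOf.2 ⟨ht.1, htb⟩) (Set.mem_setOf.2 ⟨hy1, hy2⟩) ht.2
      have h2 : deriv f t * (t - a) ≤ (deriv f y * (y - a) / f y) * f t :=
        (div_le_iff₀ hft).mp hc
      linarith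
  exact hm (left_mem_Icc.2 huv) (right_mem_Icc.2 huv) huv

/-- ψ is antitone when φ is. -/
lemma psi_anti (hab : (a : EReal) < b)
    (hf : ContDiffOn ℝ 1 f {x : ℝ | a ≤ x ∧ (x : EReal) < b})
    (hfpos : ∀ x : ℝ, a < x → (x : EReal) < b → 0 < f x)
    (hanti : AntitoneOn (fun x => deriv f x * (x - a) / f x) {x : ℝ | a < x ∧ (x : EReal) < b})
    {u v : ℝ} (hu : a < u) (hvb : (v : EReal) < b) (huv : u ≤ v) :
    f v * (v - a) / (∫ t in Set.Ioc a v, f t) ≤ f u * (u - a) / ∫ t in Set.Ioc a u, f t := by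
  have hS : ∀ y ∈ Icc u v, a < y ∧ (y : EReal) < b := fun y hy =>
    ⟨lt_of_lt_of_le hu hy.1,
      lt_of_le_of_lt (show (y : EReal) ≤ (v : EReal) from by exact_mod_cast hy.2) hvb⟩
  have hm : AntitoneOn (fun u => f u * (u - a) / ∫ t in Set.Ioc a u, f t) (Icc u v) := by
    apply antitoneOn_of_deriv_nonpos (convex_Icc u v)
    · intro y hy
      exact ((psi_deriv hab hf hfpos (hS y hy).1 (hS y hy).2).continuousAt).continuousWithinAt
    · rw [interior_Icc]
      intro y hy
      have h := hS y (Ioo_subset_Icc_self hy)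
      exact (psi_deriv hab hf hfpos h.1 h.2).differentiableAt.differentiableWithinAt
    · rw [interior_Icc]
      intro y hy
      obtain ⟨hy1, hy2⟩ := hS y (Ioo_subset_Icc_self hy)
      rw [(psi_deriv hab hf hfpos hy1 hy2).deriv]
      apply div_nonpos_of_nonpos_of_nonneg _ (sq_nonneg _)
      apply mul_nonpos_of_nonneg_of_nonpos (hfpos y hy1 hy2).le
      apply setIntegral_nonpos measurableSet_Ioc
      intro t ht
      have htb : (t : EReal) < b :=
        lt_of_le_of_lt (show (t : EReal) ≤ (y : EReal) from by exact_mod_cast ht.2) hy2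
      have hft := hfpos t ht.1 htb
      have hc := hanti (Set.mem_setOf.2 ⟨ht.1, htb⟩) (Set.mem_setOf.2 ⟨hy1, hy2⟩) ht.2
      have h2 : (deriv f y * (y - a) / f y) * f t ≤ deriv f t * (t - a) :=
        (le_div_iff₀ hft).mp hc
      linarith
  exact hm (left_mem_Icc.2 huv) (right_mem_Icc.2 huv) huv

end S8

open MeasureTheory Set

theorem stmt8
    (a : ℝ) (b : EReal) (hab : (a : EReal) < b)
    (f : ℝ → ℝ)
    (hf : ContDiffOn ℝ 1 f {x : ℝ | a ≤ x ∧ (x : EReal) < b})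
    (hf0 : ∀ x : ℝ, a ≤ x → (x : EReal) < b → 0 ≤ f x)
    (hfI : IntegrableOn f {x : ℝ | a ≤ x ∧ (x : EReal) < b} volume)
    (hfpos : ∀ x : ℝ, a < x → (x : EReal) < b → 0 < f x) :
    (MonotoneOn (fun x => deriv f x * (x - a) / f x) {x : ℝ | a < x ∧ (x : EReal) < b} →
      ∀ θ ∈ Set.Ioo (0:ℝ) 1,
      ∀ x₁ x₂ : ℝ, a < x₁ → (x₁ : EReal) < b → a < x₂ → (x₂ : EReal) < b → x₁ ≤ x₂ →
      ∀ α₁ α₂ : ℝ, α₁ ∈ Set.Icc a x₁ → α₂ ∈ Set.Icc a x₂ →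
        (∫ t in Set.Ioc a α₁, f t) = θ * ∫ t in Set.Ioc a x₁, f t →
        (∫ t in Set.Ioc a α₂, f t) = θ * ∫ t in Set.Ioc a x₂, f t →
        f α₁ * (α₁ - a) / ∫ t in Set.Ioc a x₁, f t ≤
          f α₂ * (α₂ - a) / ∫ t in Set.Ioc a x₂, f t) ∧
    (AntitoneOn (fun x => deriv f x * (x - a) / f x) {x : ℝ | a < x ∧ (x : EReal) < b} →
      ∀ θ ∈ Set.Ioo (0:ℝ) 1,
      ∀ x₁ x₂ : ℝ, a < x₁ → (x₁ : EReal) < b → a < x₂ → (x₂ : EReal) < b → x₁ ≤ x₂ →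
      ∀ α₁ α₂ : ℝ, α₁ ∈ Set.Icc a x₁ → α₂ ∈ Set.Icc a x₂ →
        (∫ t in Set.Ioc a α₁, f t) = θ * ∫ t in Set.Ioc a x₁, f t →
        (∫ t in Set.Ioc a α₂, f t) = θ * ∫ t in Set.Ioc a x₂, f t →
        f α₂ * (α₂ - a) / ∫ t in Set.Ioc a x₂, f t ≤
          f α₁ * (α₁ - a) / ∫ t in Set.Ioc a x₁, f t) := by
  have hcont := hf.continuousOn
  have setup : ∀ θ ∈ Set.Ioo (0:ℝ) 1,
      ∀ x₁ x₂ : ℝ, a < x₁ → (x₁ : EReal) < b → a < x₂ → (x₂ : EReal) < b → x₁ ≤ x₂ →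
      ∀ α₁ α₂ : ℝ, α₁ ∈ Set.Icc a x₁ → α₂ ∈ Set.Icc a x₂ →
        (∫ t in Set.Ioc a α₁, f t) = θ * ∫ t in Set.Ioc a x₁, f t →
        (∫ t in Set.Ioc a α₂, f t) = θ * ∫ t in Set.Ioc a x₂, f t →
        (a < α₁ ∧ (α₁ : EReal) < b) ∧ (a < α₂ ∧ (α₂ : EReal) < b) ∧ α₁ ≤ α₂ ∧
          0 < (∫ t in Set.Ioc a x₁, f t) ∧ 0 < (∫ t in Set.Ioc a x₂, f t) ∧
          0 < (∫ t in Set.Ioc a α₁, f t) ∧ 0 < (∫ t in Set.Ioc a α₂, f t) := by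
    rintro θ ⟨hθ0, hθ1⟩ x₁ x₂ hx₁ hx₁b hx₂ hx₂b hx12 α₁ α₂ hα₁ hα₂ he₁ he₂
    have hF1 : 0 < ∫ t in Set.Ioc a x₁, f t := S8.hFpos hcont hfpos hx₁ hx₁b
    have hF2 : 0 < ∫ t in Set.Ioc a x₂, f t := S8.hFpos hcont hfpos hx₂ hx₂b
    have hFa1 : 0 < ∫ t in Set.Ioc a α₁, f t := by rw [he₁]; positivity
    have hFa2 : 0 < ∫ t in Set.Ioc a α₂, f t := by rw [he₂]; positivity
    have ha1 : a < α₁ := by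
      rcases eq_or_lt_of_le hα₁.1 with h | h
      · rw [← h] at hFa1; simp at hFa1
      · exact h
    have ha2 : a < α₂ := by
      rcases eq_or_lt_of_le hα₂.1 with h | h
      · rw [← h] at hFa2; simp at hFa2
      · exact h
    have hα₁b : (α₁ : EReal) < b :=
      lt_of_le_of_lt (show (α₁ : EReal) ≤ (x₁ : EReal) from by exact_mod_cast hα₁.2) hx₁b
    have hα₂b : (α₂ : EReal) < b :=
      lt_of_le_of_lt (show (α₂ : EReal) ≤ (x₂ : EReal) from by exact_mod_cast hα₂.2) hx₂b
    have hle : α₁ ≤ α₂ := by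
      by_contra h
      push_neg at h
      have h1 : (∫ t in Set.Ioc a α₂, f t) < ∫ t in Set.Ioc a α₁, f t :=
        S8.hFstrict hcont hfpos hα₂.1 h hα₁b
      have h2 : (∫ t in Set.Ioc a x₁, f t) ≤ ∫ t in Set.Ioc a x₂, f t :=
        S8.hFmono hcont hf0 hx₁.le hx12 hx₂b
      rw [he₁, he₂] at h1
      nlinarith
    exact ⟨⟨ha1, hα₁b⟩, ⟨ha2, hα₂b⟩, hle, hF1, hF2, hFa1, hFa2⟩
  constructor
  · rintro hmono θ hθ x₁ x₂ hx₁ hx₁b hx₂ hx₂b hx12 α₁ α₂ hα₁ hα₂ he₁ he₂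
    obtain ⟨⟨ha1, hα₁b⟩, ⟨ha2, hα₂b⟩, hle, hF1, hF2, hFa1, hFa2⟩ :=
      setup θ hθ x₁ x₂ hx₁ hx₁b hx₂ hx₂b hx12 α₁ α₂ hα₁ hα₂ he₁ he₂
    have hpsi := S8.psi_mono hab hf hfpos hmono ha1 hα₂b hle
    rw [div_le_div_iff₀ hFa1 hFa2] at hpsi
    rw [div_le_div_iff₀ hF1 hF2]
    rw [he₁, he₂] at hpsi
    nlinarith [hθ.1]
  · rintro hanti θ hθ x₁ x₂ hx₁ hx₁b hx₂ hx₂b hx12 α₁ α₂ hα₁ hα₂ he₁ he₂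
    obtain ⟨⟨ha1, hα₁b⟩, ⟨ha2, hα₂b⟩, hle, hF1, hF2, hFa1, hFa2⟩ :=
      setup θ hθ x₁ x₂ hx₁ hx₁b hx₂ hx₂b hx12 α₁ α₂ hα₁ hα₂ he₁ he₂
    have hpsi := S8.psi_anti hab hf hfpos hanti ha1 hα₂b hle
    rw [div_le_div_iff₀ hFa2 hFa1] at hpsi
    rw [div_le_div_iff₀ hF2 hF1]
    rw [he₁, he₂] at hpsi
    nlinarith [hθ.1]
end

section
/- Let 𝒟 : [0, 1] → [0, ∞) be continuous on [0, 1] and continuously differentiable on (0, 1), with 𝒟(0) = 0 and 𝒟 > 0 on (0, 1), and suppose that 𝒟̃(s) := (𝒟'(s) − 1)/𝒟(s) has a finite limit as s → 0⁺. Define I(θ) := exp(∫₀^θ 𝒟̃(s) ds) and F⁻¹(θ) := ∫₀^θ dt/I(t) for θ ∈ [0, 1). Then F⁻¹(θ)·I(θ) = 𝒟(θ) for every θ ∈ (0, 1). Consequently, F⁻¹ is continuous and strictly increasing with inverse F, and for each fixed θ ∈ (0, 1): the map ε ↦ F(F⁻¹(θ)/(1 − ε)) is strictly increasing in ε (on the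 set of ε ∈ [0, 1) for which F⁻¹(θ)/(1 − ε) lies in the range of F⁻¹), and its derivative at ε = 0 equals 𝒟(θ). -/
open MeasureTheory Filter Set

/-- `𝒟̃(s) = (𝒟'(s) − 1)/𝒟(s)`. -/
noncomputable def Dtilde (D : ℝ → ℝ) (s : ℝ) : ℝ := (deriv D s - 1) / D s

/-- `I(θ) = exp(∫₀^θ 𝒟̃(s) ds)`. -/
noncomputable def Ifun (D : ℝ → ℝ) (θ : ℝ) : ℝ := Real.exp (∫ s in (0:ℝ)..θ, Dtilde D s)

/-- `F⁻¹(θ) = ∫₀^θ dt / I(t)`. -/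
noncomputable def Finv (D : ℝ → ℝ) (θ : ℝ) : ℝ := ∫ t in (0:ℝ)..θ, 1 / Ifun D t
lemma Ifun_pos (D : ℝ → ℝ) (t : ℝ) : 0 < Ifun D t := Real.exp_pos _

lemma dtilde_contOn {D : ℝ → ℝ} (hc1 : ContDiffOn ℝ 1 D (Set.Ioo 0 1))
    (hpos : ∀ s ∈ Set.Ioo (0:ℝ) 1, 0 < D s) :
    ContinuousOn (Dtilde D) (Set.Ioo 0 1) := by
  have h1 : ContinuousOn (deriv D) (Set.Ioo 0 1) :=
    hc1.continuousOn_deriv_of_isOpen isOpen_Ioo le_rfl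
  exact (h1.sub continuousOn_const).div hc1.continuousOn fun s hs => (hpos s hs).ne'

lemma dtilde_integrable {D : ℝ → ℝ} (hc1 : ContDiffOn ℝ 1 D (Set.Ioo 0 1))
    (hpos : ∀ s ∈ Set.Ioo (0:ℝ) 1, 0 < D s)
    (hlim : ∃ L : ℝ, Filter.Tendsto (fun s => Dtilde D s)
      (nhdsWithin 0 (Set.Ioi 0)) (nhds L))
    {b : ℝ} (hb : b ∈ Set.Ico (0:ℝ) 1) :
    IntegrableOn (Dtilde D) (Set.Ioc 0 b) := by
  obtain ⟨L, hL⟩ := hlim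
  have hb1 := hb.2
  have hev : ∀ᶠ s in nhdsWithin 0 (Set.Ioi 0), |Dtilde D s| ≤ |L| + 1 := by
    have := hL (Metric.closedBall_mem_nhds L (by norm_num : (0:ℝ) < 1))
    filter_upwards [this] with s hs
    rw [Set.mem_preimage, Metric.mem_closedBall, Real.dist_eq] at hs
    calc |Dtilde D s| ≤ |Dtilde D s - L| + |L| := by
          simpa using abs_add_le (Dtilde D s - L) L
      _ ≤ |L| + 1 := by linarith
  obtain ⟨δ, hδ0, hδ⟩ := mem_nhdsGT_iff_exists_Ioc_subset.mp hev
  rw [Set.mem_Ioi] at hδ0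
  set δ' := min δ b with hδ'
  rcases le_or_gt b 0 with hb0 | hb0
  · rw [Set.Ioc_eq_empty (by linarith)]; exact integrableOn_empty
  have hδ'0 : 0 < δ' := lt_min hδ0 hb0
  have hδ'b : δ' ≤ b := min_le_right _ _
  have h1 : IntegrableOn (Dtilde D) (Set.Ioc 0 δ') := by
    have hmeas : AEStronglyMeasurable (Dtilde D) (volume.restrict (Set.Ioc 0 δ')) := by
      refine ContinuousOn.aestronglyMeasurable ?_ measurableSet_Ioc
      exact (dtilde_contOn hc1 hpos).mono (fun x hx => ⟨hx.1, lt_of_le_of_lt hx.2 (lt_of_le_of_lt hδ'b hb1)⟩)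
    refine Integrable.mono' (integrable_const (|L| + 1)) hmeas ?_
    refine (ae_restrict_iff' measurableSet_Ioc).mpr (ae_of_all _ fun x hx => ?_)
    exact hδ ⟨hx.1, le_trans hx.2 (min_le_left _ _)⟩
  have h2 : IntegrableOn (Dtilde D) (Set.Icc δ' b) := by
    refine ContinuousOn.integrableOn_Icc ?_
    exact (dtilde_contOn hc1 hpos).mono (fun x hx => ⟨lt_of_lt_of_le hδ'0 hx.1, lt_of_le_of_lt hx.2 hb1⟩)
  refine (h1.union h2).mono_set (fun x hx => ?_)
  rcases le_or_gt x δ' with h | h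
  · exact Or.inl ⟨hx.1, h⟩
  · exact Or.inr ⟨h.le, hx.2⟩

lemma dtilde_intInt {D : ℝ → ℝ} (hc1 : ContDiffOn ℝ 1 D (Set.Ioo 0 1))
    (hpos : ∀ s ∈ Set.Ioo (0:ℝ) 1, 0 < D s)
    (hlim : ∃ L : ℝ, Filter.Tendsto (fun s => Dtilde D s)
      (nhdsWithin 0 (Set.Ioi 0)) (nhds L))
    {b : ℝ} (hb : b ∈ Set.Ico (0:ℝ) 1) :
    IntervalIntegrable (Dtilde D) volume 0 b := by
  rw [intervalIntegrable_iff_integrableOn_Ioc_of_le hb.1]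
  exact dtilde_integrable hc1 hpos hlim hb

lemma dtilde_integrable_Icc {D : ℝ → ℝ} (hc1 : ContDiffOn ℝ 1 D (Set.Ioo 0 1))
    (hpos : ∀ s ∈ Set.Ioo (0:ℝ) 1, 0 < D s)
    (hlim : ∃ L : ℝ, Filter.Tendsto (fun s => Dtilde D s)
      (nhdsWithin 0 (Set.Ioi 0)) (nhds L))
    {b : ℝ} (hb : b ∈ Set.Ico (0:ℝ) 1) :
    IntegrableOn (Dtilde D) (Set.Icc 0 b) := by
  rw [integrableOn_Icc_iff_integrableOn_Ioc]
  exact dtilde_integrable hc1 hpos hlim hb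

lemma ifun_contOn {D : ℝ → ℝ} (hc1 : ContDiffOn ℝ 1 D (Set.Ioo 0 1))
    (hpos : ∀ s ∈ Set.Ioo (0:ℝ) 1, 0 < D s)
    (hlim : ∃ L : ℝ, Filter.Tendsto (fun s => Dtilde D s)
      (nhdsWithin 0 (Set.Ioi 0)) (nhds L)) :
    ContinuousOn (Ifun D) (Set.Ico 0 1) := by
  refine Real.continuous_exp.comp_continuousOn ?_
  intro x hx
  set b := (x + 1) / 2 with hbdef
  have hxb : x < b := by simp only [hbdef]; linarith [hx.2]
  have hb : b ∈ Set.Ico (0:ℝ) 1 := ⟨by linarith [hx.1], by linarith [hx.2]⟩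
  have hcont : ContinuousOn (fun θ => ∫ s in (0:ℝ)..θ, Dtilde D s) (Set.Icc 0 b) := by
    have := intervalIntegral.continuousOn_primitive_interval
      (f := Dtilde D) (μ := volume) (a := 0) (b := b) ?_
    · rwa [Set.uIcc_of_le hb.1] at this
    · rw [Set.uIcc_of_le hb.1]
      exact dtilde_integrable_Icc hc1 hpos hlim hb
  have hmem : Set.Icc (0:ℝ) b ∈ nhdsWithin x (Set.Ico 0 1) := by
    refine Filter.mem_of_superset
      (Filter.inter_mem self_mem_nhdsWithin
        (mem_nhdsWithin_of_mem_nhds (Iio_mem_nhds hxb))) ?_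
    rintro y ⟨hy1, hy2⟩
    exact ⟨hy1.1, le_of_lt hy2⟩
  exact (hcont x ⟨hx.1, hxb.le⟩).mono_of_mem_nhdsWithin hmem

lemma oneDivIfun_contOn {D : ℝ → ℝ} (hc1 : ContDiffOn ℝ 1 D (Set.Ioo 0 1))
    (hpos : ∀ s ∈ Set.Ioo (0:ℝ) 1, 0 < D s)
    (hlim : ∃ L : ℝ, Filter.Tendsto (fun s => Dtilde D s)
      (nhdsWithin 0 (Set.Ioi 0)) (nhds L)) :
    ContinuousOn (fun t => 1 / Ifun D t) (Set.Ico 0 1) :=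
  continuousOn_const.div (ifun_contOn hc1 hpos hlim) fun t _ => (Ifun_pos D t).ne'

lemma oneDivIfun_intInt {D : ℝ → ℝ} (hc1 : ContDiffOn ℝ 1 D (Set.Ioo 0 1))
    (hpos : ∀ s ∈ Set.Ioo (0:ℝ) 1, 0 < D s)
    (hlim : ∃ L : ℝ, Filter.Tendsto (fun s => Dtilde D s)
      (nhdsWithin 0 (Set.Ioi 0)) (nhds L))
    {a b : ℝ} (ha : a ∈ Set.Ico (0:ℝ) 1) (hb : b ∈ Set.Ico (0:ℝ) 1) :
    IntervalIntegrable (fun t => 1 / Ifun D t) volume a b := by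
  refine ContinuousOn.intervalIntegrable ?_
  refine (oneDivIfun_contOn hc1 hpos hlim).mono ?_
  intro x hx
  rw [Set.uIcc_eq_union] at hx
  rcases hx with hx | hx
  · exact ⟨le_trans ha.1 hx.1, lt_of_le_of_lt hx.2 hb.2⟩
  · exact ⟨le_trans hb.1 hx.1, lt_of_le_of_lt hx.2 ha.2⟩

lemma finv_contOn {D : ℝ → ℝ} (hc1 : ContDiffOn ℝ 1 D (Set.Ioo 0 1))
    (hpos : ∀ s ∈ Set.Ioo (0:ℝ) 1, 0 < D s)
    (hlim : ∃ L : ℝ, Filter.Tendsto (fun s => Dtilde D s)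
      (nhdsWithin 0 (Set.Ioi 0)) (nhds L)) :
    ContinuousOn (Finv D) (Set.Ico 0 1) := by
  intro x hx
  set b := (x + 1) / 2 with hbdef
  have hxb : x < b := by simp only [hbdef]; linarith [hx.2]
  have hb : b ∈ Set.Ico (0:ℝ) 1 := ⟨by linarith [hx.1], by linarith [hx.2]⟩
  have hcont : ContinuousOn (Finv D) (Set.Icc 0 b) := by
    have := intervalIntegral.continuousOn_primitive_interval
      (f := fun t => 1 / Ifun D t) (μ := volume) (a := 0) (b := b) ?_
    · rwa [Set.uIcc_of_le hb.1] at this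
    · rw [Set.uIcc_of_le hb.1]
      refine ContinuousOn.integrableOn_Icc ?_
      exact (oneDivIfun_contOn hc1 hpos hlim).mono
        (fun y hy => ⟨hy.1, lt_of_le_of_lt hy.2 hb.2⟩)
  have hmem : Set.Icc (0:ℝ) b ∈ nhdsWithin x (Set.Ico 0 1) := by
    refine Filter.mem_of_superset
      (Filter.inter_mem self_mem_nhdsWithin
        (mem_nhdsWithin_of_mem_nhds (Iio_mem_nhds hxb))) ?_
    rintro y ⟨hy1, hy2⟩
    exact ⟨hy1.1, le_of_lt hy2⟩
  exact (hcont x ⟨hx.1, hxb.le⟩).mono_of_mem_nhdsWithin hmem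

lemma finv_strictMono {D : ℝ → ℝ} (hc1 : ContDiffOn ℝ 1 D (Set.Ioo 0 1))
    (hpos : ∀ s ∈ Set.Ioo (0:ℝ) 1, 0 < D s)
    (hlim : ∃ L : ℝ, Filter.Tendsto (fun s => Dtilde D s)
      (nhdsWithin 0 (Set.Ioi 0)) (nhds L)) :
    StrictMonoOn (Finv D) (Set.Ico 0 1) := by
  intro x hx y hy hxy
  have h1 : Finv D y - Finv D x = ∫ t in x..y, 1 / Ifun D t := by
    rw [Finv, Finv, ← intervalIntegral.integral_interval_sub_left
      (oneDivIfun_intInt hc1 hpos hlim (⟨le_refl 0, one_pos⟩) hy)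
      (oneDivIfun_intInt hc1 hpos hlim (⟨le_refl 0, one_pos⟩) hx)]
  have h2 : 0 < ∫ t in x..y, 1 / Ifun D t := by
    refine intervalIntegral.intervalIntegral_pos_of_pos_on
      (oneDivIfun_intInt hc1 hpos hlim hx hy) (fun t _ => ?_) hxy
    exact div_pos one_pos (Ifun_pos D t)
  linarith

lemma ifun_hasDeriv {D : ℝ → ℝ} (hc1 : ContDiffOn ℝ 1 D (Set.Ioo 0 1))
    (hpos : ∀ s ∈ Set.Ioo (0:ℝ) 1, 0 < D s)
    (hlim : ∃ L : ℝ, Filter.Tendsto (fun s => Dtilde D s)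
      (nhdsWithin 0 (Set.Ioi 0)) (nhds L))
    {θ : ℝ} (hθ : θ ∈ Set.Ioo (0:ℝ) 1) :
    HasDerivAt (Ifun D) (Ifun D θ * Dtilde D θ) θ := by
  have hJ : HasDerivAt (fun u => ∫ s in (0:ℝ)..u, Dtilde D s) (Dtilde D θ) θ := by
    refine intervalIntegral.integral_hasDerivAt_right
      (dtilde_intInt hc1 hpos hlim ⟨hθ.1.le, hθ.2⟩) ?_ ?_
    · exact ContinuousOn.stronglyMeasurableAtFilter isOpen_Ioo (dtilde_contOn hc1 hpos) θ hθ
    · exact (dtilde_contOn hc1 hpos).continuousAt (Ioo_mem_nhds hθ.1 hθ.2)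
  exact hJ.exp

lemma finv_hasDeriv {D : ℝ → ℝ} (hc1 : ContDiffOn ℝ 1 D (Set.Ioo 0 1))
    (hpos : ∀ s ∈ Set.Ioo (0:ℝ) 1, 0 < D s)
    (hlim : ∃ L : ℝ, Filter.Tendsto (fun s => Dtilde D s)
      (nhdsWithin 0 (Set.Ioi 0)) (nhds L))
    {θ : ℝ} (hθ : θ ∈ Set.Ioo (0:ℝ) 1) :
    HasDerivAt (Finv D) (1 / Ifun D θ) θ := by
  have hco : ContinuousOn (fun t => 1 / Ifun D t) (Set.Ioo 0 1) :=
    (oneDivIfun_contOn hc1 hpos hlim).mono Set.Ioo_subset_Ico_self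
  refine intervalIntegral.integral_hasDerivAt_right
    (oneDivIfun_intInt hc1 hpos hlim ⟨le_refl 0, one_pos⟩ ⟨hθ.1.le, hθ.2⟩) ?_ ?_
  · exact ContinuousOn.stronglyMeasurableAtFilter isOpen_Ioo hco θ hθ
  · exact hco.continuousAt (Ioo_mem_nhds hθ.1 hθ.2)

lemma key_identity {D : ℝ → ℝ} (hc : ContinuousOn D (Set.Icc 0 1))
    (hc1 : ContDiffOn ℝ 1 D (Set.Ioo 0 1)) (h0 : D 0 = 0)
    (hpos : ∀ s ∈ Set.Ioo (0:ℝ) 1, 0 < D s)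
    (hlim : ∃ L : ℝ, Filter.Tendsto (fun s => Dtilde D s)
      (nhdsWithin 0 (Set.Ioi 0)) (nhds L)) :
    ∀ θ ∈ Set.Ioo (0:ℝ) 1, Finv D θ * Ifun D θ = D θ := by
  set K : ℝ → ℝ := fun t => Finv D t - D t / Ifun D t with hK
  have hKderiv : ∀ t ∈ Set.Ioo (0:ℝ) 1, HasDerivAt K 0 t := by
    intro t ht
    have hD : HasDerivAt D (deriv D t) t := by
      have : DifferentiableAt ℝ D t :=
        (hc1.differentiableOn one_ne_zero).differentiableAt (Ioo_mem_nhds ht.1 ht.2)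
      exact this.hasDerivAt
    have hI := ifun_hasDeriv hc1 hpos hlim ht
    have hFi := finv_hasDeriv hc1 hpos hlim ht
    have hdiv : HasDerivAt (fun u => D u / Ifun D u)
        ((deriv D t * Ifun D t - D t * (Ifun D t * Dtilde D t)) / (Ifun D t)^2) t :=
      hD.div hI (Ifun_pos D t).ne'
    have := hFi.sub hdiv
    refine HasDerivAt.congr_deriv this ?_
    have hDt : D t ≠ 0 := (hpos t ht).ne'
    have hIt : Ifun D t ≠ 0 := (Ifun_pos D t).ne'
    simp only [Dtilde]
    field_simp
    ring
  have hconst : ∀ x ∈ Set.Ioo (0:ℝ) 1, ∀ y ∈ Set.Ioo (0:ℝ) 1, x ≤ y → K x = K y := by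
    intro x hx y hy hxy
    rcases eq_or_lt_of_le hxy with rfl | hlt
    · rfl
    have hsub : Set.Icc x y ⊆ Set.Ioo (0:ℝ) 1 :=
      fun z hz => ⟨lt_of_lt_of_le hx.1 hz.1, lt_of_le_of_lt hz.2 hy.2⟩
    obtain ⟨c, _, hc'⟩ := exists_hasDerivAt_eq_slope K (fun _ => 0) hlt
      (fun z hz => (hKderiv z (hsub hz)).continuousAt.continuousWithinAt)
      (fun z hz => hKderiv z (hsub (Set.Ioo_subset_Icc_self hz)))
    have hyx : y - x ≠ 0 := by linarith
    have : K y - K x = 0 := by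
      rw [eq_comm, div_eq_iff hyx] at hc'
      linarith
    linarith
  have hlim0 : Filter.Tendsto K (nhdsWithin 0 (Set.Ioo 0 1)) (nhds 0) := by
    have hFinv : Filter.Tendsto (Finv D) (nhdsWithin 0 (Set.Ioo 0 1)) (nhds 0) := by
      have h := (finv_contOn hc1 hpos hlim) 0 ⟨le_refl 0, one_pos⟩
      have : Finv D 0 = 0 := intervalIntegral.integral_same
      rw [ContinuousWithinAt, this] at h
      exact h.mono_left (nhdsWithin_mono 0 Set.Ioo_subset_Ico_self)
    have hD0 : Filter.Tendsto D (nhdsWithin 0 (Set.Ioo 0 1)) (nhds 0) := by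
      have h := hc 0 ⟨le_refl 0, zero_le_one⟩
      rw [ContinuousWithinAt, h0] at h
      exact h.mono_left (nhdsWithin_mono 0 (fun z hz => ⟨hz.1.le, hz.2.le⟩))
    have hI0 : Filter.Tendsto (Ifun D) (nhdsWithin 0 (Set.Ioo 0 1)) (nhds 1) := by
      have h := (ifun_contOn hc1 hpos hlim) 0 ⟨le_refl 0, one_pos⟩
      have : Ifun D 0 = 1 := by
        rw [Ifun, intervalIntegral.integral_same, Real.exp_zero]
      rw [ContinuousWithinAt, this] at h
      exact h.mono_left (nhdsWithin_mono 0 Set.Ioo_subset_Ico_self)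
    have := hFinv.sub (hD0.div hI0 one_ne_zero)
    simpa using this
  intro θ hθ
  have hne : (nhdsWithin (0:ℝ) (Set.Ioo 0 1)).NeBot := by
    rw [← mem_closure_iff_nhdsWithin_neBot, closure_Ioo (by norm_num : (0:ℝ) ≠ 1)]
    exact ⟨le_refl 0, zero_le_one⟩
  have hconstθ : Filter.Tendsto K (nhdsWithin 0 (Set.Ioo 0 1)) (nhds (K θ)) := by
    refine Filter.Tendsto.congr' ?_ tendsto_const_nhds
    filter_upwards [self_mem_nhdsWithin] with z hz
    rcases le_total z θ with h | h
    · exact (hconst z hz θ hθ h).symm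
    · exact hconst θ hθ z hz h
  have hKθ : K θ = 0 := tendsto_nhds_unique hconstθ hlim0
  have : Finv D θ = D θ / Ifun D θ := by
    have := hKθ
    simp only [hK] at this
    linarith
  rw [this, div_mul_cancel₀ _ (Ifun_pos D θ).ne']

lemma finv_surj {D : ℝ → ℝ} (hc1 : ContDiffOn ℝ 1 D (Set.Ioo 0 1))
    (hpos : ∀ s ∈ Set.Ioo (0:ℝ) 1, 0 < D s)
    (hlim : ∃ L : ℝ, Filter.Tendsto (fun s => Dtilde D s)
      (nhdsWithin 0 (Set.Ioi 0)) (nhds L))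
    {p q : ℝ} (hp : 0 ≤ p) (hpq : p ≤ q) (hq : q < 1) :
    ∀ x ∈ Set.Icc (Finv D p) (Finv D q), ∃ u ∈ Set.Icc p q, Finv D u = x := by
  intro x hx
  have hsub : Set.Icc p q ⊆ Set.Ico (0:ℝ) 1 :=
    fun z hz => ⟨le_trans hp hz.1, lt_of_le_of_lt hz.2 hq⟩
  have := intermediate_value_Icc hpq ((finv_contOn hc1 hpos hlim).mono hsub)
  obtain ⟨u, hu, hux⟩ := this hx
  exact ⟨u, hu, hux⟩

theorem stmt9
    (D : ℝ → ℝ)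
    (hc : ContinuousOn D (Set.Icc 0 1))
    (hc1 : ContDiffOn ℝ 1 D (Set.Ioo 0 1))
    (h0 : D 0 = 0)
    (hpos : ∀ s ∈ Set.Ioo (0:ℝ) 1, 0 < D s)
    (hlim : ∃ L : ℝ, Filter.Tendsto (fun s => Dtilde D s)
      (nhdsWithin 0 (Set.Ioi 0)) (nhds L)) :
    (∀ θ ∈ Set.Ioo (0:ℝ) 1, Finv D θ * Ifun D θ = D θ) ∧
    ContinuousOn (Finv D) (Set.Ico 0 1) ∧
    StrictMonoOn (Finv D) (Set.Ico 0 1) ∧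
    ∀ F : ℝ → ℝ, (∀ θ ∈ Set.Ico (0:ℝ) 1, F (Finv D θ) = θ) →
      ∀ θ ∈ Set.Ioo (0:ℝ) 1,
        StrictMonoOn (fun ε => F (Finv D θ / (1 - ε)))
          {ε : ℝ | ε ∈ Set.Ico (0:ℝ) 1 ∧
            ∃ θ' ∈ Set.Ico (0:ℝ) 1, Finv D θ' = Finv D θ / (1 - ε)} ∧
        HasDerivWithinAt (fun ε => F (Finv D θ / (1 - ε))) (D θ) (Set.Ici 0) 0 := by
  have hsm := finv_strictMono hc1 hpos hlim
  have hkey := key_identity hc hc1 h0 hpos hlim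
  refine ⟨hkey, finv_contOn hc1 hpos hlim, hsm, ?_⟩
  intro F hF θ hθ
  set c := Finv D θ with hc_def
  have hθico : θ ∈ Set.Ico (0:ℝ) 1 := ⟨hθ.1.le, hθ.2⟩
  have hFinv0 : Finv D 0 = 0 := intervalIntegral.integral_same
  have hcpos : 0 < c := by
    have := hsm (Set.mem_Ico.mpr ⟨le_refl 0, one_pos⟩) hθico hθ.1
    rwa [hFinv0] at this
  constructor
  · -- strict monotonicity
    rintro ε₁ ⟨hε₁, θ₁, hθ₁m, hθ₁⟩ ε₂ ⟨hε₂, θ₂, hθ₂m, hθ₂⟩ h12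
    have hlt : c / (1 - ε₁) < c / (1 - ε₂) := by
      apply div_lt_div_of_pos_left hcpos (by linarith [hε₂.2]) (by linarith)
    rw [← hθ₁, ← hθ₂] at hlt
    have hθlt : θ₁ < θ₂ := by
      by_contra h
      push_neg at h
      rcases eq_or_lt_of_le h with rfl | h'
      · exact lt_irrefl _ hlt
      · exact absurd (hsm hθ₂m hθ₁m h') (not_lt.mpr hlt.le)
    show F (c / (1 - ε₁)) < F (c / (1 - ε₂))
    rw [← hθ₁, ← hθ₂, hF θ₁ hθ₁m, hF θ₂ hθ₂m]
    exact hθlt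
  · -- derivative
    have hFc : F c = θ := hF θ hθico
    -- local left inverse on a neighborhood of c
    set a₀ := θ / 2 with ha₀
    set b₀ := (θ + 1) / 2 with hb₀
    have ha₀m : a₀ ∈ Set.Ico (0:ℝ) 1 := ⟨by linarith [hθ.1], by linarith [hθ.2, hθ.1]⟩
    have hb₀m : b₀ ∈ Set.Ico (0:ℝ) 1 := ⟨by linarith [hθ.1], by linarith [hθ.2]⟩
    have ha₀θ : a₀ < θ := by simp only [ha₀]; linarith [hθ.1]
    have hθb₀ : θ < b₀ := by simp only [hb₀]; linarith [hθ.2]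
    have hVc : c ∈ Set.Ioo (Finv D a₀) (Finv D b₀) :=
      ⟨hsm ha₀m hθico ha₀θ, hsm hθico hb₀m hθb₀⟩
    have hfg : ∀ᶠ x in nhds c, Finv D (F x) = x := by
      filter_upwards [Ioo_mem_nhds hVc.1 hVc.2] with x hx
      obtain ⟨u, hu, hux⟩ := finv_surj hc1 hpos hlim ha₀m.1 (by linarith) hb₀m.2 x
        ⟨hx.1.le, hx.2.le⟩
      have hum : u ∈ Set.Ico (0:ℝ) 1 :=
        ⟨le_trans ha₀m.1 hu.1, lt_of_le_of_lt hu.2 hb₀m.2⟩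
      rw [← hux, hF u hum, hux]
    have hcontF : ContinuousAt F c := by
      rw [ContinuousAt, hFc]
      rw [tendsto_order]
      constructor
      · intro b hb
        set a' := max b a₀ with ha'
        have ha'θ : a' < θ := max_lt hb ha₀θ
        have ha'm : a' ∈ Set.Ico (0:ℝ) 1 := ⟨le_trans ha₀m.1 (le_max_right _ _), lt_trans ha'θ hθ.2⟩
        have hV : Set.Ioo (Finv D a') (Finv D b₀) ∈ nhds c :=
          Ioo_mem_nhds (hsm ha'm hθico ha'θ) (hsm hθico hb₀m hθb₀)
        filter_upwards [hV] with x hx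
        obtain ⟨u, hu, hux⟩ := finv_surj hc1 hpos hlim ha'm.1
          (le_of_lt (lt_trans ha'θ hθb₀)) hb₀m.2 x ⟨hx.1.le, hx.2.le⟩
        have hum : u ∈ Set.Ico (0:ℝ) 1 :=
          ⟨le_trans ha'm.1 hu.1, lt_of_le_of_lt hu.2 hb₀m.2⟩
        rw [← hux, hF u hum]
        have : a' < u := by
          by_contra h
          push_neg at h
          rcases eq_or_lt_of_le h with rfl | h'
          · rw [hux] at hx; exact lt_irrefl _ hx.1
          · have := hsm hum ha'm h'
            rw [hux] at this
            exact absurd this (not_lt.mpr hx.1.le)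
        exact lt_of_le_of_lt (le_max_left _ _) this
      · intro b hb
        set b' := min b b₀ with hb'
        have hθb' : θ < b' := lt_min hb hθb₀
        have hb'm : b' ∈ Set.Ico (0:ℝ) 1 :=
          ⟨le_trans hθico.1 hθb'.le, lt_of_le_of_lt (min_le_right _ _) hb₀m.2⟩
        have hV : Set.Ioo (Finv D a₀) (Finv D b') ∈ nhds c :=
          Ioo_mem_nhds (hsm ha₀m hθico ha₀θ) (hsm hθico hb'm hθb')
        filter_upwards [hV] with x hx
        obtain ⟨u, hu, hux⟩ := finv_surj hc1 hpos hlim ha₀m.1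
          (le_of_lt (lt_trans ha₀θ hθb')) hb'm.2 x ⟨hx.1.le, hx.2.le⟩
        have hum : u ∈ Set.Ico (0:ℝ) 1 :=
          ⟨le_trans ha₀m.1 hu.1, lt_of_le_of_lt hu.2 hb'm.2⟩
        rw [← hux, hF u hum]
        have : u < b' := by
          by_contra h
          push_neg at h
          rcases eq_or_lt_of_le h with rfl | h'
          · rw [hux] at hx; exact lt_irrefl _ hx.2
          · have := hsm hb'm hum h'
            rw [hux] at this
            exact absurd this (not_lt.mpr hx.2.le)
        exact lt_of_lt_of_le this (min_le_left _ _)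
    have hfFc : HasDerivAt (Finv D) (1 / Ifun D θ) (F c) := by
      rw [hFc]; exact finv_hasDeriv hc1 hpos hlim hθ
    have hFder : HasDerivAt F (Ifun D θ) c := by
      have := HasDerivAt.of_local_left_inverse hcontF hfFc
        (by have := Ifun_pos D θ; positivity) hfg
      simpa [one_div] using this
    have hm : HasDerivAt (fun ε : ℝ => c / (1 - ε)) c 0 := by
      have h1 : HasDerivAt (fun ε : ℝ => 1 - ε) (-1) 0 := by
        simpa using (hasDerivAt_id (0:ℝ)).const_sub 1
      have := (hasDerivAt_const (0:ℝ) c).div h1 (by norm_num)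
      exact this.congr_deriv (by norm_num)
    have hFc' : HasDerivAt F (Ifun D θ) (c / (1 - 0)) := by
      simpa using hFder
    have hcomp := hFc'.comp 0 hm
    have hval : Ifun D θ * c = D θ := by
      rw [mul_comm]; exact hkey θ hθ
    rw [hval] at hcomp
    exact hcomp.hasDerivWithinAt
end

section
/- Let I ⊆ ℝ be an open interval and μ a probability measure on I with density e^{−ψ}, where ψ is smooth and convex on I (ψ'' ≥ 0 on I). Then for every ε ∈ (0, 1) and every interval A ⊆ I, one has μ(A_ε) ≥ 1 − (1 − μ(A))^{1/(1−ε)}. -/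
open MeasureTheory Filter Set

namespace Stmt11Aux

/-! ### Core theory: the CDF of a log-concave density is multiplicatively concave -/

variable {I : Set ℝ} {f : ℝ → ℝ} {μ : Measure ℝ}

lemma mu_null (hμ : μ = volume.withDensity (I.indicator fun x => ENNReal.ofReal (f x)))
    {s : Set ℝ} (hs : MeasurableSet s) (hsI : s ∩ I = ∅) : μ s = 0 := by
  rw [hμ, withDensity_apply _ hs]
  have h : EqOn (I.indicator fun x => ENNReal.ofReal (f x)) (fun _ => 0) s :=
    fun x hx => indicator_of_notMem
      (fun hxI => (eq_empty_iff_forall_notMem.mp hsI x) ⟨hx, hxI⟩) _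
  rw [setLIntegral_congr_fun hs h, lintegral_zero]

lemma mu_singleton (hμ : μ = volume.withDensity (I.indicator fun x => ENNReal.ofReal (f x)))
    (r : ℝ) : μ {r} = 0 := by
  rw [hμ]
  exact withDensity_absolutelyContinuous volume _ Real.volume_singleton

lemma muIoc (hfc : ContinuousOn f I) (hfpos : ∀ x ∈ I, 0 < f x)
    (hμ : μ = volume.withDensity (I.indicator fun x => ENNReal.ofReal (f x)))
    {α t : ℝ} (hαt : α ≤ t) (hsub : Icc α t ⊆ I) :
    μ (Ioc α t) = ENNReal.ofReal (∫ u in Ioc α t, f u) := by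
  have hint : IntegrableOn f (Ioc α t) volume :=
    ((hfc.mono hsub).integrableOn_Icc).mono_set Ioc_subset_Icc_self
  rw [hμ, withDensity_apply _ measurableSet_Ioc]
  rw [setLIntegral_congr_fun measurableSet_Ioc
    (fun x hx => indicator_of_mem (hsub (Ioc_subset_Icc_self hx)) _)]
  rw [← ofReal_integral_eq_lintegral_ofReal hint]
  exact (ae_restrict_iff' measurableSet_Ioc).2
    (ae_of_all _ fun x hx => (hfpos _ (hsub (Ioc_subset_Icc_self hx))).le)

lemma F_ne_zero (hIo : IsOpen I) (hfc : ContinuousOn f I) (hfpos : ∀ x ∈ I, 0 < f x)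
    (hμ : μ = volume.withDensity (I.indicator fun x => ENNReal.ofReal (f x)))
    {t : ℝ} (ht : t ∈ I) : μ (Iic t) ≠ 0 := by
  obtain ⟨η, hη, hball⟩ := Metric.isOpen_iff.mp hIo t ht
  rw [Real.ball_eq_Ioo] at hball
  have hIcc : Icc (t - η / 2) t ⊆ I := fun s hs =>
    hball ⟨by linarith [hs.1], by linarith [hs.2]⟩
  have hαt : t - η / 2 ≤ t := by linarith
  obtain ⟨w, hw, hwmin⟩ := isCompact_Icc.exists_isMinOn (nonempty_Icc.2 hαt)
    (hfc.mono hIcc)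
  have hint : IntegrableOn f (Ioc (t - η / 2) t) volume :=
    ((hfc.mono hIcc).integrableOn_Icc).mono_set Ioc_subset_Icc_self
  have hIleb : f w * (η / 2) ≤ ∫ u in Ioc (t - η / 2) t, f u := by
    have h1 : ∫ (_ : ℝ) in Ioc (t - η / 2) t, f w ∂volume = f w * (η / 2) := by
      rw [setIntegral_const]
      simp [Real.volume_Ioc]
      rw [max_eq_left (by linarith)]
      ring
    rw [← h1]
    exact setIntegral_mono_on (integrableOn_const (by simp [Real.volume_Ioc]))
      hint measurableSet_Ioc (fun x hx => hwmin (Ioc_subset_Icc_self hx))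
  have hpos : 0 < ∫ u in Ioc (t - η / 2) t, f u :=
    lt_of_lt_of_le (by have := hfpos w (hIcc hw); positivity) hIleb
  intro h0
  have h1 : μ (Ioc (t - η / 2) t) = 0 :=
    le_antisymm (le_trans (measure_mono Ioc_subset_Iic_self) h0.le) zero_le
  rw [muIoc hfc hfpos hμ hαt hIcc] at h1
  simp only [ENNReal.ofReal_eq_zero] at h1
  linarith

lemma F_pos (hIo : IsOpen I) (hfc : ContinuousOn f I) (hfpos : ∀ x ∈ I, 0 < f x)
    (hμ : μ = volume.withDensity (I.indicator fun x => ENNReal.ofReal (f x)))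
    (hfin : ∀ s : Set ℝ, μ s ≠ ⊤)
    {t : ℝ} (ht : t ∈ I) : 0 < (μ (Iic t)).toReal :=
  ENNReal.toReal_pos (F_ne_zero hIo hfc hfpos hμ ht) (hfin _)

lemma F_hasDeriv (hIo : IsOpen I) (hfc : ContinuousOn f I) (hfpos : ∀ x ∈ I, 0 < f x)
    (hμ : μ = volume.withDensity (I.indicator fun x => ENNReal.ofReal (f x)))
    (hfin : ∀ s : Set ℝ, μ s ≠ ⊤)
    {t₀ : ℝ} (ht₀ : t₀ ∈ I) :
    HasDerivAt (fun s => (μ (Iic s)).toReal) (f t₀) t₀ := by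
  obtain ⟨η, hη, hball⟩ := Metric.isOpen_iff.mp hIo t₀ ht₀
  rw [Real.ball_eq_Ioo] at hball
  have hαt : t₀ - η / 2 ≤ t₀ := by linarith
  have key : ∀ t ∈ Ioo (t₀ - η / 2) (t₀ + η / 2),
      (μ (Iic t)).toReal = (μ (Iic (t₀ - η / 2))).toReal + ∫ u in (t₀ - η / 2)..t, f u := by
    intro t ht
    have ht1 := ht.1
    have ht2 := ht.2
    have hαt' : t₀ - η / 2 ≤ t := ht1.le
    have hIcc : Icc (t₀ - η / 2) t ⊆ I := fun s hs =>
      hball ⟨by linarith [hs.1], by linarith [hs.2]⟩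
    have hsplit : μ (Iic t) = μ (Iic (t₀ - η / 2)) + μ (Ioc (t₀ - η / 2) t) := by
      rw [← measure_union (Iic_disjoint_Ioc le_rfl) measurableSet_Ioc,
        Iic_union_Ioc_eq_Iic hαt']
    rw [hsplit, ENNReal.toReal_add (hfin _) (hfin _),
      muIoc hfc hfpos hμ hαt' hIcc,
      ENNReal.toReal_ofReal (setIntegral_nonneg measurableSet_Ioc
        fun x hx => (hfpos _ (hIcc (Ioc_subset_Icc_self hx))).le),
      intervalIntegral.integral_of_le hαt']
  have heq : (fun s => (μ (Iic s)).toReal)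
      =ᶠ[nhds t₀] fun t => (μ (Iic (t₀ - η / 2))).toReal + ∫ u in (t₀ - η / 2)..t, f u := by
    filter_upwards [Ioo_mem_nhds (show t₀ - η / 2 < t₀ by linarith)
      (show t₀ < t₀ + η / 2 by linarith)] with t ht
    exact key t ht
  have hFTC : HasDerivAt (fun t => ∫ u in (t₀ - η / 2)..t, f u) (f t₀) t₀ := by
    apply intervalIntegral.integral_hasDerivAt_right
    · apply ContinuousOn.intervalIntegrable
      apply hfc.mono
      rw [uIcc_of_le hαt]
      exact fun s hs => hball ⟨by linarith [hs.1], by linarith [hs.2]⟩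
    · exact ContinuousOn.stronglyMeasurableAtFilter hIo hfc t₀ ht₀
    · exact hfc.continuousAt (hIo.mem_nhds ht₀)
  exact ((hFTC.const_add _)).congr_of_eventuallyEq heq

lemma ratio_key (hIc : I.OrdConnected) (hfpos : ∀ x ∈ I, 0 < f x)
    (hlc : ∀ p ∈ I, ∀ q ∈ I, ∀ l : ℝ, 0 ≤ l → l ≤ 1 →
      f p ^ l * f q ^ (1 - l) ≤ f (l * p + (1 - l) * q))
    {s t : ℝ} (hsI : s ∈ I) (htI : t ∈ I) (hst : s ≤ t) :
    ∀ u ∈ I, u ≤ s → f t * f u ≤ f s * f (u + (t - s)) := by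
  intro u huI hus
  rcases eq_or_lt_of_le (hus.trans hst) with h | hut
  · have hsu : s = u := le_antisymm (by linarith) hus
    have htu : t = u := h.symm
    subst hsu; subst htu
    simp
  · set l := (t - s) / (t - u) with hl
    have htu : 0 < t - u := by linarith
    have hl0 : 0 ≤ l := div_nonneg (by linarith) htu.le
    have hl1 : l ≤ 1 := (div_le_one htu).2 (by linarith)
    have hlm : l * (t - u) = t - s := by rw [hl]; field_simp [htu.ne']
    have e1 : l * u + (1 - l) * t = s := by linear_combination -hlm
    have e2 : l * t + (1 - l) * u = u + (t - s) := by linear_combination hlm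
    have hu1 : f u ^ l * f u ^ (1 - l) = f u := by
      rw [← Real.rpow_add (hfpos u huI)]; norm_num
    have ht1 : f t ^ l * f t ^ (1 - l) = f t := by
      rw [← Real.rpow_add (hfpos t htI)]; norm_num
    have A := hlc u huI t htI l hl0 hl1
    rw [e1] at A
    have B := hlc t htI u huI l hl0 hl1
    rw [e2] at B
    calc f t * f u = (f u ^ l * f t ^ (1 - l)) * (f t ^ l * f u ^ (1 - l)) := by
          rw [show (f u ^ l * f t ^ (1 - l)) * (f t ^ l * f u ^ (1 - l))
            = (f u ^ l * f u ^ (1 - l)) * (f t ^ l * f t ^ (1 - l)) by ring, hu1, ht1]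
          ring
      _ ≤ f s * f (u + (t - s)) := by
          exact mul_le_mul A B
            (mul_nonneg (Real.rpow_nonneg (hfpos t htI).le _)
              (Real.rpow_nonneg (hfpos u huI).le _)) (hfpos s hsI).le

lemma ratio (hIc : I.OrdConnected) (hfpos : ∀ x ∈ I, 0 < f x)
    (hlc : ∀ p ∈ I, ∀ q ∈ I, ∀ l : ℝ, 0 ≤ l → l ≤ 1 →
      f p ^ l * f q ^ (1 - l) ≤ f (l * p + (1 - l) * q))
    (hμ : μ = volume.withDensity (I.indicator fun x => ENNReal.ofReal (f x)))
    (hfin : ∀ s : Set ℝ, μ s ≠ ⊤)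
    {s t : ℝ} (hsI : s ∈ I) (htI : t ∈ I) (hst : s ≤ t) :
    f t * (μ (Iic s)).toReal ≤ f s * (μ (Iic t)).toReal := by
  set ρ : ℝ → ENNReal := I.indicator fun x => ENNReal.ofReal (f x) with hρ
  have key : ENNReal.ofReal (f t) * μ (Iic s) ≤ ENNReal.ofReal (f s) * μ (Iic t) := by
    rw [hμ]
    rw [withDensity_apply _ measurableSet_Iic, withDensity_apply _ measurableSet_Iic]
    rw [← lintegral_indicator measurableSet_Iic, ← lintegral_indicator measurableSet_Iic]
    have htrans : ∫⁻ u, (Iic t).indicator ρ u = ∫⁻ u, (Iic t).indicator ρ (u + (t - s)) :=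
      (lintegral_add_right_eq_self (fun u => (Iic t).indicator ρ u) (t - s)).symm
    rw [htrans, ← lintegral_const_mul' _ _ ENNReal.ofReal_ne_top,
      ← lintegral_const_mul' _ _ ENNReal.ofReal_ne_top]
    refine lintegral_mono fun u => ?_
    by_cases hu : u ∈ Iic s
    · rw [indicator_of_mem hu,
        indicator_of_mem (show u + (t - s) ∈ Iic t by simp only [mem_Iic] at hu ⊢; linarith)]
      by_cases huI : u ∈ I
      · have hmem2 : u + (t - s) ∈ I := hIc.out huI htI ⟨by linarith, by
          simp only [mem_Iic] at hu; linarith⟩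
        rw [hρ]; simp only [indicator_of_mem huI, indicator_of_mem hmem2]
        rw [← ENNReal.ofReal_mul (hfpos t htI).le, ← ENNReal.ofReal_mul (hfpos s hsI).le]
        exact ENNReal.ofReal_le_ofReal
          (ratio_key hIc hfpos hlc hsI htI hst u huI hu)
      · rw [hρ]; simp [indicator_of_notMem huI]
    · rw [indicator_of_notMem hu]; simp
  have h1 : (ENNReal.ofReal (f t) * μ (Iic s)).toReal = f t * (μ (Iic s)).toReal := by
    rw [ENNReal.toReal_mul, ENNReal.toReal_ofReal (hfpos t htI).le]
  have h2 : (ENNReal.ofReal (f s) * μ (Iic t)).toReal = f s * (μ (Iic t)).toReal := by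
    rw [ENNReal.toReal_mul, ENNReal.toReal_ofReal (hfpos s hsI).le]
  have := ENNReal.toReal_mono (ENNReal.mul_ne_top ENNReal.ofReal_ne_top (hfin _)) key
  rwa [h1, h2] at this

lemma concave_logF (hIo : IsOpen I) (hIc : I.OrdConnected)
    (hfc : ContinuousOn f I) (hfpos : ∀ x ∈ I, 0 < f x)
    (hlc : ∀ p ∈ I, ∀ q ∈ I, ∀ l : ℝ, 0 ≤ l → l ≤ 1 →
      f p ^ l * f q ^ (1 - l) ≤ f (l * p + (1 - l) * q))
    (hμ : μ = volume.withDensity (I.indicator fun x => ENNReal.ofReal (f x)))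
    (hfin : ∀ s : Set ℝ, μ s ≠ ⊤) :
    ConcaveOn ℝ I fun t => Real.log (μ (Iic t)).toReal := by
  have hconv : Convex ℝ I := convex_iff_ordConnected.mpr hIc
  have hderiv : ∀ t ∈ I, HasDerivAt (fun s => Real.log (μ (Iic s)).toReal)
      (f t / (μ (Iic t)).toReal) t := fun t ht =>
    (F_hasDeriv hIo hfc hfpos hμ hfin ht).log (F_pos hIo hfc hfpos hμ hfin ht).ne'
  apply AntitoneOn.concaveOn_of_deriv hconv
  · exact fun t ht => (hderiv t ht).continuousAt.continuousWithinAt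
  · rw [hIo.interior_eq]
    exact fun t ht => (hderiv t ht).differentiableAt.differentiableWithinAt
  · rw [hIo.interior_eq]
    intro s hsI t htI hst
    rw [(hderiv s hsI).deriv, (hderiv t htI).deriv]
    rw [div_le_div_iff₀ (F_pos hIo hfc hfpos hμ hfin htI) (F_pos hIo hfc hfpos hμ hfin hsI)]
    exact ratio hIc hfpos hlc hμ hfin hsI htI hst

lemma core_in (hIo : IsOpen I) (hIc : I.OrdConnected)
    (hfc : ContinuousOn f I) (hfpos : ∀ x ∈ I, 0 < f x)
    (hlc : ∀ p ∈ I, ∀ q ∈ I, ∀ l : ℝ, 0 ≤ l → l ≤ 1 →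
      f p ^ l * f q ^ (1 - l) ≤ f (l * p + (1 - l) * q))
    (hμ : μ = volume.withDensity (I.indicator fun x => ENNReal.ofReal (f x)))
    (hfin : ∀ s : Set ℝ, μ s ≠ ⊤)
    {x y l : ℝ} (hx : x ∈ I) (hy : y ∈ I) (hxy : x ≤ y) (hl0 : 0 ≤ l) (hl1 : l ≤ 1) :
    (μ (Iic x)).toReal ^ l * (μ (Iic y)).toReal ^ (1 - l)
      ≤ (μ (Iic (l * x + (1 - l) * y))).toReal := by
  have hzmem : l * x + (1 - l) * y ∈ I := by
    apply hIc.out hx hy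
    constructor
    · nlinarith
    · nlinarith
  have hFx := F_pos hIo hfc hfpos hμ hfin hx
  have hFy := F_pos hIo hfc hfpos hμ hfin hy
  have hFz := F_pos hIo hfc hfpos hμ hfin hzmem
  have hcc := (concave_logF hIo hIc hfc hfpos hlc hμ hfin).2 hx hy hl0
    (by linarith : (0:ℝ) ≤ 1 - l) (by ring)
  simp only [smul_eq_mul] at hcc
  calc (μ (Iic x)).toReal ^ l * (μ (Iic y)).toReal ^ (1 - l)
      = Real.exp (Real.log (μ (Iic x)).toReal * l)
        * Real.exp (Real.log (μ (Iic y)).toReal * (1 - l)) := by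
        rw [Real.rpow_def_of_pos hFx, Real.rpow_def_of_pos hFy]
    _ = Real.exp (l * Real.log (μ (Iic x)).toReal + (1 - l) * Real.log (μ (Iic y)).toReal) := by
        rw [← Real.exp_add]; ring_nf
    _ ≤ Real.exp (Real.log (μ (Iic (l * x + (1 - l) * y))).toReal) := Real.exp_le_exp.2 hcc
    _ = (μ (Iic (l * x + (1 - l) * y))).toReal := Real.exp_log hFz

lemma core (hIo : IsOpen I) (hIc : I.OrdConnected)
    (hfc : ContinuousOn f I) (hfpos : ∀ x ∈ I, 0 < f x)
    (hlc : ∀ p ∈ I, ∀ q ∈ I, ∀ l : ℝ, 0 ≤ l → l ≤ 1 →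
      f p ^ l * f q ^ (1 - l) ≤ f (l * p + (1 - l) * q))
    (hμ : μ = volume.withDensity (I.indicator fun x => ENNReal.ofReal (f x)))
    (hfin : ∀ s : Set ℝ, μ s ≠ ⊤)
    {x z y l : ℝ} (hxz : x ≤ z) (hzy : z ≤ y) (hl0 : 0 ≤ l) (hl1 : l ≤ 1)
    (hz : z = l * x + (1 - l) * y) :
    (μ (Iic x)).toReal ^ l * (μ (Iic y)).toReal ^ (1 - l) ≤ (μ (Iic z)).toReal := by
  have hFmono : ∀ {s t : ℝ}, s ≤ t → (μ (Iic s)).toReal ≤ (μ (Iic t)).toReal :=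
    fun {s t} h => ENNReal.toReal_mono (hfin _) (measure_mono (Iic_subset_Iic.2 h))
  rcases eq_or_lt_of_le hl0 with h0 | hl0'
  · have hzy' : z = y := by rw [hz, ← h0]; ring
    rw [← h0, hzy']
    simp
  rcases eq_or_lt_of_le hl1 with h1 | hl1'
  · have hzx : z = x := by rw [hz, h1]; ring
    rw [h1, hzx]
    simp
  by_cases hFx0 : (μ (Iic x)).toReal = 0
  · rw [hFx0, Real.zero_rpow hl0'.ne', zero_mul]
    exact ENNReal.toReal_nonneg
  have hFxpos : 0 < (μ (Iic x)).toReal :=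
    lt_of_le_of_ne ENNReal.toReal_nonneg (Ne.symm hFx0)
  rcases eq_or_lt_of_le (hxz.trans hzy) with hxy | hxy
  · have hzx : z = x := le_antisymm (hxy ▸ hzy) hxz
    rw [← hxy, hzx, ← Real.rpow_add hFxpos]
    norm_num
  -- obtain a point of I strictly below x
  have hw : ∃ w ∈ I, w < x := by
    by_contra hcon
    push_neg at hcon
    apply hFx0
    have hnull : μ (Iic x) = 0 := by
      rw [hμ, withDensity_apply _ measurableSet_Iic]
      refine le_antisymm ?_ zero_le
      calc ∫⁻ u in Iic x, (I.indicator fun v => ENNReal.ofReal (f v)) u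
          ≤ ∫⁻ u in Iic x, ({x} : Set ℝ).indicator (fun _ => (⊤ : ENNReal)) u := by
            refine setLIntegral_mono' measurableSet_Iic fun u hu => ?_
            by_cases huI : u ∈ I
            · have hux : u = x := le_antisymm hu (hcon u huI)
              rw [hux]
              simp
            · simp [indicator_of_notMem huI]
        _ ≤ ∫⁻ u, ({x} : Set ℝ).indicator (fun _ => (⊤ : ENNReal)) u :=
            setLIntegral_le_lintegral _ _
        _ = ∫⁻ u in ({x} : Set ℝ), (⊤ : ENNReal) := lintegral_indicator (by simp) _
        _ = 0 := by simp [Real.volume_singleton]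
    rw [hnull]
    simp
  obtain ⟨w, hwI, hwx⟩ := hw
  by_cases hzi : ∃ i ∈ I, z < i
  · obtain ⟨i₀, hi₀I, hzi₀⟩ := hzi
    have hxI : x ∈ I := hIc.out hwI hi₀I ⟨hwx.le, (hxz.trans_lt hzi₀).le⟩
    have hzI : z ∈ I := hIc.out hwI hi₀I ⟨(hwx.trans_le hxz).le, hzi₀.le⟩
    by_cases hyI : y ∈ I
    · rw [hz]
      exact core_in hIo hIc hfc hfpos hlc hμ hfin hxI hyI hxy.le hl0 hl1
    · -- y is above all of I
      have hIy : ∀ i ∈ I, i < y := by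
        intro i hiI
        by_contra hcon
        push_neg at hcon
        exact hyI (hIc.out hzI hiI ⟨hzy, hcon⟩)
      -- key inequality for elements of I above z
      have key : ∀ i ∈ I, z < i →
          (μ (Iic x)).toReal ^ l * (μ (Iic i)).toReal ^ (1 - l) ≤ (μ (Iic z)).toReal := by
        intro i hiI hzi
        have hxi : x ≤ i := (hxz.trans_lt hzi).le
        have hle : l * x + (1 - l) * i ≤ z := by
          rw [hz]
          have : i < y := hIy i hiI
          nlinarith
        calc (μ (Iic x)).toReal ^ l * (μ (Iic i)).toReal ^ (1 - l)
            ≤ (μ (Iic (l * x + (1 - l) * i))).toReal :=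
              core_in hIo hIc hfc hfpos hlc hμ hfin hxI hiI hxi hl0 hl1
          _ ≤ (μ (Iic z)).toReal := hFmono hle
      -- sup argument: F y is bounded by the limit of F over I
      have hbddI : ∀ i ∈ I, i < y := hIy
      set c₀ : ℝ := ((μ (Iic z)).toReal / (μ (Iic x)).toReal ^ l) ^ (1 / (1 - l)) with hc₀
      have hc₀nonneg : 0 ≤ c₀ := by
        apply Real.rpow_nonneg
        apply div_nonneg ENNReal.toReal_nonneg
        positivity
      have hFi_le : ∀ i ∈ I, z < i → (μ (Iic i)).toReal ≤ c₀ := by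
        intro i hiI hzi
        have hk := key i hiI hzi
        have hxl : 0 < (μ (Iic x)).toReal ^ l := Real.rpow_pos_of_pos hFxpos l
        have h2 : (μ (Iic i)).toReal ^ (1 - l) ≤ (μ (Iic z)).toReal / (μ (Iic x)).toReal ^ l := by
          rw [le_div_iff₀ hxl]
          linarith [hk]
        have h3 : ((μ (Iic i)).toReal ^ (1 - l)) ^ (1 / (1 - l))
            ≤ ((μ (Iic z)).toReal / (μ (Iic x)).toReal ^ l) ^ (1 / (1 - l)) :=
          Real.rpow_le_rpow (Real.rpow_nonneg ENNReal.toReal_nonneg _) h2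
            (one_div_nonneg.2 (by linarith))
        rwa [← Real.rpow_mul ENNReal.toReal_nonneg, mul_one_div,
          div_self (by linarith : (1:ℝ) - l ≠ 0), Real.rpow_one] at h3
      -- F y ≤ c₀
      have hFy_le : (μ (Iic y)).toReal ≤ c₀ := by
        have hbdd : BddAbove I := ⟨y, fun i hi => (hIy i hi).le⟩
        have hne : I.Nonempty := ⟨i₀, hi₀I⟩
        set S := sSup I with hS
        have hzS : z < S := lt_of_lt_of_le hzi₀ (le_csSup hbdd hi₀I)
        set u : ℕ → ℝ := fun n => S - 1 / (n + 1) with hu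
        have humono : Monotone u := by
          intro m n hmn
          have hcast : (m : ℝ) ≤ (n : ℝ) := Nat.cast_le.mpr hmn
          have : (1:ℝ) / (n + 1) ≤ 1 / (m + 1) :=
            one_div_le_one_div_of_le (by positivity) (by linarith)
          simp only [hu]
          linarith
        have huS : ∀ n, u n < S := fun n => by
          have : (0:ℝ) < 1 / ((n : ℝ) + 1) := by positivity
          simp only [hu]; linarith
        have hIsub : I ⊆ ⋃ n, Iic (u n) := by
          intro i hiI
          have hiS : i < S := by
            rcases lt_or_eq_of_le (le_csSup hbdd hiI) with h | h
            · exact h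
            · exfalso
              obtain ⟨η, hη, hball⟩ := Metric.isOpen_iff.mp hIo i hiI
              rw [Real.ball_eq_Ioo] at hball
              have hmem : i + η / 2 ∈ I := hball ⟨by linarith, by linarith⟩
              have := le_csSup hbdd hmem
              rw [← h] at this
              linarith
          obtain ⟨n, hn⟩ := exists_nat_one_div_lt (by linarith : (0:ℝ) < S - i)
          refine mem_iUnion.2 ⟨n, ?_⟩
          simp only [hu, mem_Iic]
          have : (1:ℝ) / (n + 1) < S - i := hn
          linarith
        have hdir : Directed (· ⊆ ·) fun n => Iic (u n) := fun m n =>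
          ⟨max m n, Iic_subset_Iic.2 (humono (le_max_left m n)),
            Iic_subset_Iic.2 (humono (le_max_right m n))⟩
        have hnulldiff : μ (Iic y \ ⋃ n, Iic (u n)) = 0 := by
          apply mu_null hμ (measurableSet_Iic.diff (MeasurableSet.iUnion fun n => measurableSet_Iic))
          rw [eq_empty_iff_forall_notMem]
          rintro r ⟨⟨_, hr2⟩, hrI⟩
          exact hr2 (hIsub hrI)
        have hsum : μ (Iic y) ≤ μ (⋃ n, Iic (u n)) := by
          calc μ (Iic y) ≤ μ ((⋃ n, Iic (u n)) ∪ (Iic y \ ⋃ n, Iic (u n))) :=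
                measure_mono (fun r hr => by
                  by_cases h : r ∈ ⋃ n, Iic (u n)
                  · exact Or.inl h
                  · exact Or.inr ⟨hr, h⟩)
            _ ≤ μ (⋃ n, Iic (u n)) + μ (Iic y \ ⋃ n, Iic (u n)) := measure_union_le _ _
            _ = μ (⋃ n, Iic (u n)) := by rw [hnulldiff, add_zero]
        have hbound : ∀ n, μ (Iic (u n)) ≤ ENNReal.ofReal c₀ := by
          intro n
          obtain ⟨j, hjI, hj⟩ := (lt_csSup_iff hbdd hne).1
            (show max z (u n) < S from max_lt hzS (huS n))
          have h1 : μ (Iic (u n)) ≤ μ (Iic j) :=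
            measure_mono (Iic_subset_Iic.2 (((le_max_right z (u n)).trans hj.le)))
          have h2 : (μ (Iic j)).toReal ≤ c₀ :=
            hFi_le j hjI ((le_max_left z (u n)).trans_lt hj)
          calc μ (Iic (u n)) ≤ μ (Iic j) := h1
            _ = ENNReal.ofReal (μ (Iic j)).toReal := (ENNReal.ofReal_toReal (hfin _)).symm
            _ ≤ ENNReal.ofReal c₀ := ENNReal.ofReal_le_ofReal h2
        have hfinal : μ (Iic y) ≤ ENNReal.ofReal c₀ := by
          calc μ (Iic y) ≤ μ (⋃ n, Iic (u n)) := hsum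
            _ = ⨆ n, μ (Iic (u n)) := hdir.measure_iUnion
            _ ≤ ENNReal.ofReal c₀ := iSup_le hbound
        calc (μ (Iic y)).toReal ≤ (ENNReal.ofReal c₀).toReal :=
              ENNReal.toReal_mono ENNReal.ofReal_ne_top hfinal
          _ = c₀ := ENNReal.toReal_ofReal hc₀nonneg
      have h4 : (μ (Iic y)).toReal ^ (1 - l) ≤ c₀ ^ (1 - l) :=
        Real.rpow_le_rpow ENNReal.toReal_nonneg hFy_le (by linarith)
      have h5 : c₀ ^ (1 - l) = (μ (Iic z)).toReal / (μ (Iic x)).toReal ^ l := by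
        rw [hc₀, ← Real.rpow_mul (div_nonneg ENNReal.toReal_nonneg (by positivity)),
          one_div, inv_mul_cancel₀ (by linarith : (1:ℝ) - l ≠ 0), Real.rpow_one]
      calc (μ (Iic x)).toReal ^ l * (μ (Iic y)).toReal ^ (1 - l)
          ≤ (μ (Iic x)).toReal ^ l * c₀ ^ (1 - l) := by
            apply mul_le_mul_of_nonneg_left h4 (by positivity)
        _ = (μ (Iic z)).toReal := by
            rw [h5, mul_div_cancel₀]
            positivity
  · -- no element of I above z : F z = F univ
    push_neg at hzi
    have hIoiz : μ (Ioi z) = 0 := by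
      apply mu_null hμ measurableSet_Ioi
      rw [eq_empty_iff_forall_notMem]
      rintro r ⟨hr1, hr2⟩
      exact absurd (hzi r hr2) (not_le.2 hr1)
    have hFz : μ (Iic z) = μ univ := by
      have := measure_add_measure_compl (measurableSet_Iic (a := z)) (μ := μ)
      rw [compl_Iic, hIoiz, add_zero] at this
      exact this
    have h1 : (μ (Iic y)).toReal ≤ (μ (Iic z)).toReal := by
      rw [hFz]
      exact ENNReal.toReal_mono (hfin _) (measure_mono (subset_univ _))
    calc (μ (Iic x)).toReal ^ l * (μ (Iic y)).toReal ^ (1 - l)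
        ≤ (μ (Iic y)).toReal ^ l * (μ (Iic y)).toReal ^ (1 - l) := by
          apply mul_le_mul_of_nonneg_right _ (Real.rpow_nonneg ENNReal.toReal_nonneg _)
          exact Real.rpow_le_rpow ENNReal.toReal_nonneg (hFmono hxy.le) hl0
      _ = (μ (Iic y)).toReal := by
          rw [← Real.rpow_add' ENNReal.toReal_nonneg (by norm_num)]
          norm_num
      _ ≤ (μ (Iic z)).toReal := h1

lemma reflect_measure (hμ : μ = volume.withDensity (I.indicator fun x => ENNReal.ofReal (f x)))
    {s : Set ℝ} (hs : MeasurableSet s) :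
    (volume.withDensity (((fun x : ℝ => -x) ⁻¹' I).indicator
        fun x => ENNReal.ofReal (f (-x)))) s = μ ((fun x : ℝ => -x) ⁻¹' s) := by
  rw [withDensity_apply _ hs, hμ, withDensity_apply _ (hs.preimage measurable_neg),
    ← lintegral_indicator hs, ← lintegral_indicator (hs.preimage measurable_neg)]
  have hneg : ∀ g : ℝ → ENNReal, ∫⁻ u, g u = ∫⁻ u, g (-u) := by
    intro g
    have h1 := lintegral_map_equiv (μ := (volume : Measure ℝ)) g (MeasurableEquiv.neg ℝ)
    have h2 : (volume : Measure ℝ).map (MeasurableEquiv.neg ℝ) = volume := by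
      have : ⇑(MeasurableEquiv.neg ℝ) = (fun x : ℝ => -x) := rfl
      rw [this]
      exact Measure.map_neg_eq_self volume
    rw [h2] at h1
    simpa using h1
  rw [hneg fun u => s.indicator (((fun x : ℝ => -x) ⁻¹' I).indicator
    fun x => ENNReal.ofReal (f (-x))) u]
  apply lintegral_congr
  intro u
  by_cases hus : -u ∈ s
  · rw [indicator_of_mem hus, indicator_of_mem (show u ∈ (fun x : ℝ => -x) ⁻¹' s from hus)]
    by_cases huI : u ∈ I
    · rw [indicator_of_mem (show -u ∈ (fun x : ℝ => -x) ⁻¹' I by simp [huI]),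
        indicator_of_mem huI]
      simp
    · rw [indicator_of_notMem (show -u ∉ (fun x : ℝ => -x) ⁻¹' I by simp [huI]),
        indicator_of_notMem huI]
  · rw [indicator_of_notMem hus,
      indicator_of_notMem (show u ∉ (fun x : ℝ => -x) ⁻¹' s from hus)]

lemma core_Ici (hIo : IsOpen I) (hIc : I.OrdConnected)
    (hfc : ContinuousOn f I) (hfpos : ∀ x ∈ I, 0 < f x)
    (hlc : ∀ p ∈ I, ∀ q ∈ I, ∀ l : ℝ, 0 ≤ l → l ≤ 1 →
      f p ^ l * f q ^ (1 - l) ≤ f (l * p + (1 - l) * q))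
    (hμ : μ = volume.withDensity (I.indicator fun x => ENNReal.ofReal (f x)))
    (hfin : ∀ s : Set ℝ, μ s ≠ ⊤)
    {x z y l : ℝ} (hyz : y ≤ z) (hzx : z ≤ x) (hl0 : 0 ≤ l) (hl1 : l ≤ 1)
    (hz : z = l * x + (1 - l) * y) :
    (μ (Ici x)).toReal ^ l * (μ (Ici y)).toReal ^ (1 - l) ≤ (μ (Ici z)).toReal := by
  set I' : Set ℝ := (fun x : ℝ => -x) ⁻¹' I with hI'
  set f' : ℝ → ℝ := fun x => f (-x) with hf'
  set ν : Measure ℝ := volume.withDensity (I'.indicator fun x => ENNReal.ofReal (f' x)) with hν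
  have hrefl : ∀ s : Set ℝ, MeasurableSet s → ν s = μ ((fun x : ℝ => -x) ⁻¹' s) :=
    fun s hs => reflect_measure hμ hs
  have hIic : ∀ t : ℝ, ν (Iic t) = μ (Ici (-t)) := by
    intro t
    rw [hrefl _ measurableSet_Iic]
    congr 1
    ext w
    simp [neg_le]
  have hI'o : IsOpen I' := hIo.preimage continuous_neg
  have hI'c : I'.OrdConnected := by
    constructor
    intro p hp q hq r hr
    exact hIc.out hq hp ⟨neg_le_neg hr.2, neg_le_neg hr.1⟩
  have hf'c : ContinuousOn f' I' := by
    apply ContinuousOn.comp hfc (continuous_neg.continuousOn)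
    intro w hw
    exact hw
  have hf'pos : ∀ w ∈ I', 0 < f' w := fun w hw => hfpos (-w) hw
  have hlc' : ∀ p ∈ I', ∀ q ∈ I', ∀ m : ℝ, 0 ≤ m → m ≤ 1 →
      f' p ^ m * f' q ^ (1 - m) ≤ f' (m * p + (1 - m) * q) := by
    intro p hp q hq m hm0 hm1
    have := hlc (-p) hp (-q) hq m hm0 hm1
    have heq : -(m * p + (1 - m) * q) = m * (-p) + (1 - m) * (-q) := by ring
    simp only [hf']
    rw [heq]
    exact this
  have hν'fin : ∀ s : Set ℝ, ν s ≠ ⊤ := by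
    intro s
    have h1 : ν s ≤ ν univ := measure_mono (subset_univ _)
    have h2 : ν univ = μ univ := by rw [hrefl _ MeasurableSet.univ]; simp
    exact (h1.trans_lt (h2 ▸ (hfin univ).lt_top)).ne
  have hmain := core hI'o hI'c hf'c hf'pos hlc' hν hν'fin
    (x := -x) (z := -z) (y := -y) (l := l)
    (neg_le_neg hzx) (neg_le_neg hyz) hl0 hl1 (by rw [hz]; ring)
  rw [hIic, hIic, hIic, neg_neg, neg_neg, neg_neg] at hmain
  exact hmain

lemma mem_dil_right {A : Set ℝ} {ε x c y : ℝ} (hε0 : 0 < ε) (hε1 : ε < 1)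
    (hxy : x < y) (hsub : Ioo c y ⊆ A) (hfrac : c - x < ε * (y - x)) : x ∈ dil A ε := by
  refine Or.inr ⟨y, ?_⟩
  set s₀ : ℝ := max ((c - x) / (y - x)) 0 with hs₀
  have hyx : 0 < y - x := by linarith
  have hs₀ε : s₀ < ε := max_lt ((div_lt_iff₀ hyx).2 (by linarith)) hε0
  have hs₀0 : 0 ≤ s₀ := le_max_right _ _
  have hsub2 : Ioo s₀ 1 ⊆ {t : ℝ | t ∈ Icc (0:ℝ) 1 ∧ x + t * (y - x) ∈ A} := by
    intro t ht
    refine ⟨⟨hs₀0.trans ht.1.le, ht.2.le⟩, hsub ⟨?_, ?_⟩⟩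
    · have h1 : (c - x) / (y - x) < t := (le_max_left _ _).trans_lt ht.1
      have := (div_lt_iff₀ hyx).1 h1
      linarith
    · nlinarith [ht.2]
  calc ENNReal.ofReal (1 - ε) < ENNReal.ofReal (1 - s₀) :=
        (ENNReal.ofReal_lt_ofReal_iff (by linarith)).2 (by linarith)
    _ = volume (Ioo s₀ 1) := by rw [Real.volume_Ioo]
    _ ≤ volume {t : ℝ | t ∈ Icc (0:ℝ) 1 ∧ x + t * (y - x) ∈ A} := measure_mono hsub2

lemma mem_dil_left {A : Set ℝ} {ε x c y : ℝ} (hε0 : 0 < ε) (hε1 : ε < 1)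
    (hyx : y < x) (hsub : Ioo y c ⊆ A) (hfrac : x - c < ε * (x - y)) : x ∈ dil A ε := by
  refine Or.inr ⟨y, ?_⟩
  set s₀ : ℝ := max ((x - c) / (x - y)) 0 with hs₀
  have hxy : 0 < x - y := by linarith
  have hs₀ε : s₀ < ε := max_lt ((div_lt_iff₀ hxy).2 (by linarith)) hε0
  have hs₀0 : 0 ≤ s₀ := le_max_right _ _
  have hsub2 : Ioo s₀ 1 ⊆ {t : ℝ | t ∈ Icc (0:ℝ) 1 ∧ x + t * (y - x) ∈ A} := by
    intro t ht
    refine ⟨⟨hs₀0.trans ht.1.le, ht.2.le⟩, hsub ⟨?_, ?_⟩⟩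
    · nlinarith [ht.2]
    · have h1 : (x - c) / (x - y) < t := (le_max_left _ _).trans_lt ht.1
      have := (div_lt_iff₀ hxy).1 h1
      nlinarith
  calc ENNReal.ofReal (1 - ε) < ENNReal.ofReal (1 - s₀) :=
        (ENNReal.ofReal_lt_ofReal_iff (by linarith)).2 (by linarith)
    _ = volume (Ioo s₀ 1) := by rw [Real.volume_Ioo]
    _ ≤ volume {t : ℝ | t ∈ Icc (0:ℝ) 1 ∧ x + t * (y - x) ∈ A} := measure_mono hsub2

end Stmt11Aux

set_option maxHeartbeats 1000000 in
open Stmt11Aux in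
theorem stmt11
    (I : Set ℝ) (hIo : IsOpen I) (hIc : I.OrdConnected)
    (ψ : ℝ → ℝ) (hψ : ContDiffOn ℝ (⊤ : ℕ∞) ψ I)
    (hconv : ∀ x ∈ I, 0 ≤ deriv (deriv ψ) x)
    (μ : Measure ℝ) [IsProbabilityMeasure μ]
    (hμ : μ = volume.withDensity (I.indicator fun x => ENNReal.ofReal (Real.exp (-ψ x))))
    (ε : ℝ) (hε : ε ∈ Set.Ioo (0:ℝ) 1)
    (A : Set ℝ) (hA : A ⊆ I) (hAc : A.OrdConnected) :
    (μ (dil A ε)).toReal ≥ 1 - (1 - (μ A).toReal) ^ (1 / (1 - ε)) := by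
  obtain ⟨hε0, hε1⟩ := hε
  have hfin : ∀ s : Set ℝ, μ s ≠ ⊤ := fun s => measure_ne_top μ s
  have hfc : ContinuousOn (fun x => Real.exp (-ψ x)) I :=
    Real.continuous_exp.comp_continuousOn hψ.continuousOn.neg
  have hfpos : ∀ x ∈ I, 0 < Real.exp (-ψ x) := fun x _ => Real.exp_pos _
  have hpA1 : (μ A).toReal ≤ 1 := by
    have := ENNReal.toReal_mono (hfin univ) (measure_mono (subset_univ A))
    rwa [measure_univ, ENNReal.toReal_one] at this
  have hpA0 : 0 ≤ (μ A).toReal := ENNReal.toReal_nonneg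
  have hRHS0 : 0 ≤ (1 - (μ A).toReal) ^ (1 / (1 - ε)) :=
    Real.rpow_nonneg (by linarith) _
  -- convexity of ψ
  have hconvexOn : ConvexOn ℝ I ψ := by
    have h1 : ContDiffOn ℝ (⊤ : ℕ∞) (deriv ψ) I := hψ.deriv_of_isOpen hIo (by simp)
    apply convexOn_of_deriv2_nonneg (convex_iff_ordConnected.mpr hIc) hψ.continuousOn
    · rw [hIo.interior_eq]
      exact fun x hx => ((hψ.differentiableOn (by simp)).differentiableAt
        (hIo.mem_nhds hx)).differentiableWithinAt
    · rw [hIo.interior_eq]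
      exact fun x hx => ((h1.differentiableOn (by simp)).differentiableAt
        (hIo.mem_nhds hx)).differentiableWithinAt
    · rw [hIo.interior_eq]
      intro x hx
      have h2 : deriv^[2] ψ x = deriv (deriv ψ) x := by
        rw [show (2:ℕ) = 1 + 1 from rfl, Function.iterate_succ_apply',
          Function.iterate_one]
      rw [h2]
      exact hconv x hx
  have hlc : ∀ p ∈ I, ∀ q ∈ I, ∀ l : ℝ, 0 ≤ l → l ≤ 1 →
      Real.exp (-ψ p) ^ l * Real.exp (-ψ q) ^ (1 - l)
        ≤ Real.exp (-ψ (l * p + (1 - l) * q)) := by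
    intro p hp q hq l hl0 hl1
    have hcc := hconvexOn.2 hp hq hl0 (by linarith : (0:ℝ) ≤ 1 - l) (by ring)
    simp only [smul_eq_mul] at hcc
    have e1 : Real.exp (-ψ p) ^ l = Real.exp (-ψ p * l) := by
      rw [Real.rpow_def_of_pos (Real.exp_pos _), Real.log_exp]
    have e2 : Real.exp (-ψ q) ^ (1 - l) = Real.exp (-ψ q * (1 - l)) := by
      rw [Real.rpow_def_of_pos (Real.exp_pos _), Real.log_exp]
    rw [e1, e2, ← Real.exp_add]
    apply Real.exp_le_exp.2
    nlinarith [hcc]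
  rcases A.eq_empty_or_nonempty with hAe | hAne
  · -- empty case
    rw [hAe]
    simp only [measure_empty, ENNReal.toReal_zero, sub_zero, Real.one_rpow]
    simp only [sub_self, ge_iff_le]
    exact ENNReal.toReal_nonneg
  by_cases hbddA : BddAbove A
  swap
  · -- A unbounded above : dilation is everything
    have huniv : dil A ε = univ := by
      rw [eq_univ_iff_forall]
      intro x
      obtain ⟨c, hcA, hcx⟩ := (not_bddAbove_iff.1 hbddA) x
      obtain ⟨y, hyA, hy⟩ := (not_bddAbove_iff.1 hbddA) (max c (x + (c - x) / ε))
      have hcy : Ioo c y ⊆ A := fun r hr => hAc.out hcA hyA ⟨hr.1.le, hr.2.le⟩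
      have hxy : x < y := lt_of_lt_of_le hcx ((le_max_left _ _).trans hy.le)
      apply mem_dil_right hε0 hε1 hxy hcy
      have h1 : x + (c - x) / ε < y := lt_of_le_of_lt (le_max_right _ _) hy
      have h2 : (c - x) / ε < y - x := by linarith
      have := (div_lt_iff₀ hε0).1 h2
      linarith
    rw [huniv, measure_univ, ENNReal.toReal_one]
    linarith
  by_cases hbddB : BddBelow A
  swap
  · -- A unbounded below
    have huniv : dil A ε = univ := by
      rw [eq_univ_iff_forall]
      intro x
      obtain ⟨c, hcA, hcx⟩ := (not_bddBelow_iff.1 hbddB) x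
      obtain ⟨y, hyA, hy⟩ := (not_bddBelow_iff.1 hbddB) (min c (x - (x - c) / ε))
      have hcy : Ioo y c ⊆ A := fun r hr => hAc.out hyA hcA ⟨hr.1.le, hr.2.le⟩
      have hxy : y < x := lt_of_le_of_lt ((min_le_left _ _).trans' hy.le) hcx
      apply mem_dil_left hε0 hε1 hxy hcy
      have h1 : y < x - (x - c) / ε := lt_of_lt_of_le hy (min_le_right _ _)
      have h2 : (x - c) / ε < x - y := by linarith
      have := (div_lt_iff₀ hε0).1 h2
      linarith
    rw [huniv, measure_univ, ENNReal.toReal_one]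
    linarith
  -- bounded nonempty case
  have hnull : ∀ r : ℝ, μ {r} = 0 := fun r => mu_singleton hμ r
  by_cases hab : sInf A < sSup A
  swap
  · -- degenerate interval
    have hsub : A ⊆ {sInf A} := by
      intro p hp
      have h1 : sInf A ≤ p := csInf_le hbddB hp
      have h2 : p ≤ sSup A := le_csSup hbddA hp
      have h3 : sSup A ≤ sInf A := not_lt.1 hab
      simp only [mem_singleton_iff]
      linarith
    have hA0 : μ A = 0 := le_antisymm (le_trans (measure_mono hsub) (hnull _).le) zero_le
    rw [hA0]
    simp only [ENNReal.toReal_zero, sub_zero, Real.one_rpow, sub_self, ge_iff_le]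
    exact ENNReal.toReal_nonneg
  set a := sInf A with ha
  set b := sSup A with hb
  set d : ℝ := ε * (b - a) / (1 - ε) with hd
  have hd0 : 0 < d := div_pos (mul_pos hε0 (by linarith)) (by linarith)
  have hIooA : Ioo a b ⊆ A := by
    intro r hr
    obtain ⟨p, hpA, hpr⟩ := (csInf_lt_iff hbddB hAne).1 hr.1
    obtain ⟨q, hqA, hrq⟩ := (lt_csSup_iff hbddA hAne).1 hr.2
    exact hAc.out hpA hqA ⟨hpr.le, hrq.le⟩
  have hAIcc : A ⊆ Icc a b := fun p hp => ⟨csInf_le hbddB hp, le_csSup hbddA hp⟩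
  have hdil : Ioo (a - d) (b + d) ⊆ dil A ε := by
    intro x hx
    rcases lt_or_ge x b with hxb | hbx
    · apply mem_dil_right hε0 hε1 hxb hIooA
      have h0 : a - x < d := by linarith [hx.1]
      have h1 : (a - x) * (1 - ε) < ε * (b - a) := by
        have := (lt_div_iff₀ (show (0:ℝ) < 1 - ε by linarith)).1 h0
        linarith
      nlinarith
    · apply mem_dil_left hε0 hε1 (show a < x from lt_of_lt_of_le hab hbx) hIooA
      have h0 : x - b < d := by linarith [hx.2]
      have h1 : (x - b) * (1 - ε) < ε * (b - a) := by
        have := (lt_div_iff₀ (show (0:ℝ) < 1 - ε by linarith)).1 h0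
        linarith
      nlinarith
  -- measure bookkeeping
  have hcompl3 : ∀ p q : ℝ, p < q → (μ (Ioo p q)).toReal
      = 1 - ((μ (Iic p)).toReal + (μ (Ici q)).toReal) := by
    intro p q hpq
    have hIoo_eq : Ioo p q = (Iic p ∪ Ici q)ᶜ := by
      ext r
      simp only [mem_Ioo, mem_compl_iff, mem_union, mem_Iic, mem_Ici, not_or, not_le]
    have hdisj : Disjoint (Iic p) (Ici q) := Iic_disjoint_Ici.2 (not_le.2 hpq)
    have hle1 : μ (Iic p ∪ Ici q) ≤ 1 := by
      rw [← measure_univ (μ := μ)]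
      exact measure_mono (subset_univ _)
    rw [hIoo_eq, measure_compl (measurableSet_Iic.union measurableSet_Ici) (hfin _),
      measure_univ, ENNReal.toReal_sub_of_le hle1 ENNReal.one_ne_top,
      measure_union hdisj measurableSet_Ici, ENNReal.toReal_add (hfin _) (hfin _),
      ENNReal.toReal_one]
  have hIciIoi : ∀ r : ℝ, μ (Ici r) = μ (Ioi r) := by
    intro r
    refine le_antisymm ?_ (measure_mono Ioi_subset_Ici_self)
    calc μ (Ici r) ≤ μ (Ioi r ∪ {r}) := measure_mono (fun w hw => by
          rcases eq_or_lt_of_le (show r ≤ w from hw) with h | h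
          · exact Or.inr (by simp [← h])
          · exact Or.inl h)
      _ ≤ μ (Ioi r) + μ {r} := measure_union_le _ _
      _ = μ (Ioi r) := by rw [hnull, add_zero]
  have hIicIci : ∀ r : ℝ, (μ (Iic r)).toReal = 1 - (μ (Ici r)).toReal := by
    intro r
    have h2 : μ (Iic r) = 1 - μ (Ioi r) := by
      rw [← compl_Ioi, measure_compl measurableSet_Ioi (hfin _), measure_univ]
    have hle1 : μ (Ioi r) ≤ 1 := by
      rw [← measure_univ (μ := μ)]
      exact measure_mono (subset_univ _)
    rw [h2, ENNReal.toReal_sub_of_le hle1 ENNReal.one_ne_top, ENNReal.toReal_one,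
      hIciIoi r]
  have hIciIic : ∀ r : ℝ, (μ (Ici r)).toReal = 1 - (μ (Iic r)).toReal := by
    intro r
    rw [hIicIci r]
    ring
  have hμA : (μ A).toReal = 1 - ((μ (Iic a)).toReal + (μ (Ici b)).toReal) := by
    have h1 : μ A = μ (Ioo a b) := by
      refine le_antisymm ?_ (measure_mono hIooA)
      calc μ A ≤ μ (Icc a b) := measure_mono hAIcc
        _ ≤ μ (Ioo a b ∪ ({a} ∪ {b})) := measure_mono (fun w hw => by
            rcases eq_or_lt_of_le hw.1 with h | h
            · exact Or.inr (Or.inl (by simp [← h]))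
            rcases eq_or_lt_of_le hw.2 with h' | h'
            · exact Or.inr (Or.inr (by simp [h']))
            · exact Or.inl ⟨h, h'⟩)
        _ ≤ μ (Ioo a b) + (μ {a} + μ {b}) :=
            le_trans (measure_union_le _ _) (by gcongr; exact measure_union_le _ _)
        _ = μ (Ioo a b) := by rw [hnull, hnull]; simp
    rw [h1, hcompl3 a b hab]
  set u := (μ (Iic a)).toReal with hu
  set v := (μ (Ici b)).toReal with hv
  have hu0 : 0 ≤ u := ENNReal.toReal_nonneg
  have hv0 : 0 ≤ v := ENNReal.toReal_nonneg
  have huv1 : u + v ≤ 1 := by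
    have h0 : 0 ≤ (μ A).toReal := ENNReal.toReal_nonneg
    linarith [hμA]
  -- core concavity estimates
  have hne' : (1:ℝ) - ε ≠ 0 := by linarith
  have hzleft : a = (1 - ε) * (a - d) + (1 - (1 - ε)) * b := by
    rw [hd]
    field_simp
    ring
  have hC1 := core hIo hIc hfc hfpos hlc hμ hfin
    (x := a - d) (z := a) (y := b) (l := 1 - ε)
    (by linarith) hab.le (by linarith) (by linarith) hzleft
  have hzright : b = (1 - ε) * (b + d) + (1 - (1 - ε)) * a := by
    rw [hd]
    field_simp
    ring
  have hC2 := core_Ici hIo hIc hfc hfpos hlc hμ hfin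
    (x := b + d) (z := b) (y := a) (l := 1 - ε)
    hab.le (by linarith) (by linarith) (by linarith) hzright
  set e : ℝ := ε / (1 - ε) with he
  have he0 : 0 ≤ e := le_of_lt (div_pos hε0 (by linarith))
  have hse : 1 + e = 1 / (1 - ε) := by
    rw [he, eq_div_iff hne']
    field_simp
    ring
  have hpow : ∀ {P Q R : ℝ}, 0 ≤ P → 0 ≤ Q → 0 ≤ R →
      P ^ (1 - ε) * Q ^ (1 - (1 - ε)) ≤ R → P * Q ^ e ≤ R ^ (1 + e) := by
    intro P Q R hP hQ hR h
    have hne : (1:ℝ) - ε ≠ 0 := by linarith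
    have h2 := Real.rpow_le_rpow
      (mul_nonneg (Real.rpow_nonneg hP _) (Real.rpow_nonneg hQ _)) h
      (le_of_lt (show (0:ℝ) < 1 / (1 - ε) from div_pos one_pos (by linarith)))
    rw [Real.mul_rpow (Real.rpow_nonneg hP _) (Real.rpow_nonneg hQ _),
      ← Real.rpow_mul hP, ← Real.rpow_mul hQ,
      show (1 - ε) * (1 / (1 - ε)) = 1 by field_simp,
      show (1 - (1 - ε)) * (1 / (1 - ε)) = e by rw [he]; ring,
      Real.rpow_one] at h2
    rwa [hse]
  set X := (μ (Iic (a - d))).toReal with hX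
  set Y := (μ (Ici (b + d))).toReal with hY
  have hpowX : X * (μ (Iic b)).toReal ^ e ≤ u ^ (1 + e) :=
    hpow ENNReal.toReal_nonneg ENNReal.toReal_nonneg ENNReal.toReal_nonneg hC1
  have hpowY : Y * (μ (Ici a)).toReal ^ e ≤ v ^ (1 + e) :=
    hpow ENNReal.toReal_nonneg ENNReal.toReal_nonneg ENNReal.toReal_nonneg hC2
  have hFb : (μ (Iic b)).toReal = 1 - v := by rw [hIicIci b, ← hv]
  have hSa : (μ (Ici a)).toReal = 1 - u := by rw [hIciIic a, ← hu]
  have hXb : X ≤ u * (u + v) ^ e := by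
    rcases eq_or_lt_of_le (show v ≤ 1 by linarith) with hv1 | hv1
    · have hu0' : u = 0 := by linarith
      have hXa : X ≤ u := ENNReal.toReal_mono (hfin _)
        (measure_mono (Iic_subset_Iic.2 (show a - d ≤ a by linarith)))
      rw [hu0', zero_mul]
      rw [hu0'] at hXa
      exact hXa
    · have h1 : u ^ (1 + e) = u * u ^ e := by
        rw [Real.rpow_add' hu0 (ne_of_gt (show (0:ℝ) < 1 + e by linarith)), Real.rpow_one]
      have h2 : u ≤ (u + v) * (1 - v) := by
        nlinarith [mul_nonneg hv0 (show (0:ℝ) ≤ 1 - u - v by linarith)]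
      have h3 : u ^ e ≤ ((u + v) * (1 - v)) ^ e := Real.rpow_le_rpow hu0 h2 he0
      have h4 : ((u + v) * (1 - v)) ^ e = (u + v) ^ e * (1 - v) ^ e :=
        Real.mul_rpow (by linarith) (by linarith)
      have h5 : X * (1 - v) ^ e ≤ u * ((u + v) ^ e * (1 - v) ^ e) := by
        calc X * (1 - v) ^ e = X * (μ (Iic b)).toReal ^ e := by rw [hFb]
          _ ≤ u ^ (1 + e) := hpowX
          _ = u * u ^ e := h1
          _ ≤ u * ((u + v) ^ e * (1 - v) ^ e) := by
              rw [← h4]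
              exact mul_le_mul_of_nonneg_left h3 hu0
      have h6 : 0 < (1 - v) ^ e := Real.rpow_pos_of_pos (by linarith) e
      exact le_of_mul_le_mul_right (by rw [mul_assoc]; exact h5) h6
  have hYb : Y ≤ v * (u + v) ^ e := by
    rcases eq_or_lt_of_le (show u ≤ 1 by linarith) with hu1 | hu1
    · have hv0' : v = 0 := by linarith
      have hYa : Y ≤ v := ENNReal.toReal_mono (hfin _)
        (measure_mono (Ici_subset_Ici.2 (show b ≤ b + d by linarith)))
      rw [hv0', zero_mul]
      rw [hv0'] at hYa
      exact hYa
    · have h1 : v ^ (1 + e) = v * v ^ e := by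
        rw [Real.rpow_add' hv0 (ne_of_gt (show (0:ℝ) < 1 + e by linarith)), Real.rpow_one]
      have h2 : v ≤ (u + v) * (1 - u) := by
        nlinarith [mul_nonneg hu0 (show (0:ℝ) ≤ 1 - u - v by linarith)]
      have h3 : v ^ e ≤ ((u + v) * (1 - u)) ^ e := Real.rpow_le_rpow hv0 h2 he0
      have h4 : ((u + v) * (1 - u)) ^ e = (u + v) ^ e * (1 - u) ^ e :=
        Real.mul_rpow (by linarith) (by linarith)
      have h5 : Y * (1 - u) ^ e ≤ v * ((u + v) ^ e * (1 - u) ^ e) := by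
        calc Y * (1 - u) ^ e = Y * (μ (Ici a)).toReal ^ e := by rw [hSa]
          _ ≤ v ^ (1 + e) := hpowY
          _ = v * v ^ e := h1
          _ ≤ v * ((u + v) ^ e * (1 - u) ^ e) := by
              rw [← h4]
              exact mul_le_mul_of_nonneg_left h3 hv0
      have h6 : 0 < (1 - u) ^ e := Real.rpow_pos_of_pos (by linarith) e
      exact le_of_mul_le_mul_right (by rw [mul_assoc]; exact h5) h6
  have hsum : X + Y ≤ (u + v) ^ (1 + e) := by
    have h1 : (u + v) ^ (1 + e) = (u + v) * (u + v) ^ e := by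
      rw [Real.rpow_add' (by linarith) (ne_of_gt (show (0:ℝ) < 1 + e by linarith)),
        Real.rpow_one]
    have h2 : u * (u + v) ^ e + v * (u + v) ^ e = (u + v) * (u + v) ^ e := by ring
    rw [h1]
    linarith
  have hLHS : 1 - (X + Y) ≤ (μ (dil A ε)).toReal := by
    have h1 : (μ (Ioo (a - d) (b + d))).toReal = 1 - (X + Y) := by
      rw [hcompl3 (a - d) (b + d) (by linarith), ← hX, ← hY]
    calc 1 - (X + Y) = (μ (Ioo (a - d) (b + d))).toReal := h1.symm
      _ ≤ (μ (dil A ε)).toReal := ENNReal.toReal_mono (hfin _) (measure_mono hdil)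
  rw [ge_iff_le]
  have hfinal : 1 - (μ A).toReal = u + v := by rw [hμA]; ring
  rw [hfinal, ← hse]
  linarith
end

section
/- Let (E, ‖·‖) be a real normed vector space. For every x₀ ∈ E, r > 0 and ε ∈ (0, 1), the ε-dilation of the open ball B(x₀, r) satisfies B(x₀, r)_ε ⊆ B(x₀, (1+ε)r/(1−ε)). -/
open MeasureTheory Filter Set

/-- The ε-dilation of a set `A` in a real vector space, along segments. -/
def dilV {E : Type*} [NormedAddCommGroup E] [NormedSpace ℝ E] (A : Set E) (ε : ℝ) : Set E :=
  A ∪ {x : E | ∃ y : E,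
    volume {t : ℝ | t ∈ Set.Icc (0:ℝ) 1 ∧ x + t • (y - x) ∈ A} > ENNReal.ofReal (1 - ε)}

theorem stmt17
    {E : Type*} [NormedAddCommGroup E] [NormedSpace ℝ E]
    (x₀ : E) (r ε : ℝ) (hr : 0 < r) (hε : ε ∈ Set.Ioo (0:ℝ) 1) :
    dilV (Metric.ball x₀ r) ε ⊆ Metric.ball x₀ ((1 + ε) * r / (1 - ε)) := by
  obtain ⟨hε0, hε1⟩ := hε
  have h1ε : (0:ℝ) < 1 - ε := by linarith
  intro x hx
  rcases hx with hx | ⟨y, hvol⟩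
  · refine Metric.ball_subset_ball ?_ hx
    rw [le_div_iff₀ h1ε]
    nlinarith
  · set S : Set ℝ := {t : ℝ | t ∈ Set.Icc (0:ℝ) 1 ∧ x + t • (y - x) ∈ Metric.ball x₀ r}
      with hS
    have hSsub : S ⊆ Set.Icc (0:ℝ) 1 := fun t ht => ht.1
    have hne : S.Nonempty := by
      rw [Set.nonempty_iff_ne_empty]
      intro h
      rw [h] at hvol
      simp only [measure_empty] at hvol
      exact (ENNReal.ofReal_pos.mpr h1ε).not_gt (by exact_mod_cast hvol)
    have hbdd : BddAbove S := ⟨1, fun t ht => (hSsub ht).2⟩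
    have hbddb : BddBelow S := ⟨0, fun t ht => (hSsub ht).1⟩
    set a := sInf S with ha
    set b := sSup S with hb
    have ha0 : 0 ≤ a := le_csInf hne fun t ht => (hSsub ht).1
    have hb1 : b ≤ 1 := csSup_le hne fun t ht => (hSsub ht).2
    have hab0 : a ≤ b := csInf_le_csSup hne hbddb hbdd
    have hSab : S ⊆ Set.Icc a b := fun t ht => ⟨csInf_le hbddb ht, le_csSup hbdd ht⟩
    have hmeas : volume S ≤ volume (Set.Icc a b) := measure_mono hSab
    rw [Real.volume_Icc] at hmeas
    have hba : 1 - ε < b - a := by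
      have := lt_of_lt_of_le hvol hmeas
      rwa [ENNReal.ofReal_lt_ofReal_iff_of_nonneg h1ε.le] at this
    have hkey : a < ε * b := by nlinarith
    set δ := (ε * b - a) / 2 with hδ
    have hδ0 : 0 < δ := by simp only [hδ]; linarith
    obtain ⟨t₂, ht₂S, ht₂⟩ : ∃ t₂ ∈ S, b - δ / ε < t₂ := by
      apply exists_lt_of_lt_csSup hne
      have : 0 < δ / ε := div_pos hδ0 hε0
      linarith
    obtain ⟨t₁, ht₁S, ht₁⟩ : ∃ t₁ ∈ S, t₁ < a + δ := by
      apply exists_lt_of_csInf_lt hne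
      linarith
    have ht12 : t₁ < ε * t₂ := by
      have h1 : ε * t₂ > ε * (b - δ / ε) := by
        exact mul_lt_mul_of_pos_left ht₂ hε0
      have h2 : ε * (b - δ / ε) = ε * b - δ := by
        field_simp
      nlinarith
    have ht10 : 0 ≤ t₁ := (hSsub ht₁S).1
    have ht20 : 0 < t₂ := by nlinarith
    have htlt : t₁ < t₂ := by nlinarith
    have hd : 0 < t₂ - t₁ := by linarith
    set c := t₁ / (t₂ - t₁) with hc
    have hc0 : 0 ≤ c := div_nonneg ht10 hd.le
    have hz₁ : ‖x + t₁ • (y - x) - x₀‖ < r := by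
      have := ht₁S.2
      rwa [Metric.mem_ball, dist_eq_norm] at this
    have hz₂ : ‖x + t₂ • (y - x) - x₀‖ < r := by
      have := ht₂S.2
      rwa [Metric.mem_ball, dist_eq_norm] at this
    have hid : x - x₀ = (1 + c) • (x + t₁ • (y - x) - x₀) - c • (x + t₂ • (y - x) - x₀) := by
      rw [hc]
      match_scalars <;> field_simp [hd.ne'] <;> ring
    rw [Metric.mem_ball, dist_eq_norm]
    calc ‖x - x₀‖ = ‖(1 + c) • (x + t₁ • (y - x) - x₀) - c • (x + t₂ • (y - x) - x₀)‖ := by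
          rw [hid]
      _ ≤ (1 + c) * ‖x + t₁ • (y - x) - x₀‖ + c * ‖x + t₂ • (y - x) - x₀‖ := by
          refine le_trans (norm_sub_le _ _) ?_
          rw [norm_smul, norm_smul, Real.norm_eq_abs, Real.norm_eq_abs,
            abs_of_nonneg (by linarith : (0:ℝ) ≤ 1 + c), abs_of_nonneg hc0]
      _ < (1 + c) * r + c * r := by
          have h1 : (0:ℝ) < 1 + c := by linarith
          exact add_lt_add_of_lt_of_le (mul_lt_mul_of_pos_left hz₁ h1)
            (mul_le_mul_of_nonneg_left hz₂.le hc0)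
      _ ≤ (1 + ε) * r / (1 - ε) := by
          have hc2 : c * (1 - ε) ≤ ε := by
            rw [hc, div_mul_eq_mul_div, div_le_iff₀ hd]
            nlinarith
          rw [le_div_iff₀ h1ε]
          nlinarith [mul_le_mul_of_nonneg_left hc2 hr.le]
end

section
/- Let (Ω, 𝒜, m) be a probability space, N ≥ 1 a real number, and ν = ρ·m a probability measure on Ω whose density ρ ≥ 0 satisfies ρ^{(1+N)/N} ∈ L¹(m). Then N ∫ ρ^{(1+N)/N} dm − N = sup over measurable g : Ω → [0, ∞) with g^{1+N} ∈ L¹(m) of [ (1+N) ∫ g dν − ∫ g^{1+N} dm ] − N, and the supremum is attained at g = ρ^{1/N}. -/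
open MeasureTheory

lemma young_aux {N a b : ℝ} (hN : 1 ≤ N) (ha : 0 ≤ a) (hb : 0 ≤ b) :
    (1 + N) * (a * b) ≤ a ^ (1 + N) + N * b ^ ((1 + N) / N) := by
  have hN0 : 0 < N := by linarith
  have hpq : (1 + N).HolderConjugate ((1 + N) / N) := by
    refine (Real.holderConjugate_iff_eq_conjExponent (by linarith)).2 ?_
    rw [add_sub_cancel_left]
  have h := Real.young_inequality_of_nonneg ha hb hpq
  have h1 : 0 < 1 + N := by linarith
  have h2 : (1 + N) * (a ^ (1 + N) / (1 + N)) = a ^ (1 + N) := by field_simp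
  have h3 : (1 + N) * (b ^ ((1 + N) / N) / ((1 + N) / N)) = N * b ^ ((1 + N) / N) := by
    field_simp
  nlinarith [Real.rpow_nonneg ha (1 + N), Real.rpow_nonneg hb ((1 + N) / N)]

theorem stmt19
    {Ω : Type*} [MeasurableSpace Ω] (m : Measure Ω) [IsProbabilityMeasure m]
    (N : ℝ) (hN : 1 ≤ N)
    (ρ : Ω → ℝ) (hρm : Measurable ρ) (hρ0 : ∀ ω, 0 ≤ ρ ω)
    (ν : Measure Ω) [IsProbabilityMeasure ν]
    (hν : ν = m.withDensity fun ω => ENNReal.ofReal (ρ ω))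
    (hL1 : Integrable (fun ω => ρ ω ^ ((1 + N) / N)) m) :
    IsGreatest
      {r : ℝ | ∃ g : Ω → ℝ, Measurable g ∧ (∀ ω, 0 ≤ g ω) ∧
        Integrable (fun ω => g ω ^ (1 + N)) m ∧
        r = ((1 + N) * ∫ ω, g ω * ρ ω ∂m) - (∫ ω, g ω ^ (1 + N) ∂m) - N}
      (N * (∫ ω, ρ ω ^ ((1 + N) / N) ∂m) - N) ∧
    ((1 + N) * ∫ ω, (ρ ω ^ (1 / N)) * ρ ω ∂m) -
        (∫ ω, (ρ ω ^ (1 / N)) ^ (1 + N) ∂m) - N =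
      N * (∫ ω, ρ ω ^ ((1 + N) / N) ∂m) - N := by
  have hN0 : 0 < N := by linarith
  have hgρ : ∀ ω, ρ ω ^ (1 / N) * ρ ω = ρ ω ^ ((1 + N) / N) := by
    intro ω
    rcases eq_or_lt_of_le (hρ0 ω) with h | h
    · rw [← h, Real.zero_rpow (by positivity : (1:ℝ)/N ≠ 0),
        Real.zero_rpow (by positivity : (1+N)/N ≠ 0), zero_mul]
    · nth_rewrite 2 [← Real.rpow_one (ρ ω)]
      rw [← Real.rpow_add h]
      congr 1
      field_simp
  have hgp : ∀ ω, (ρ ω ^ (1 / N)) ^ (1 + N) = ρ ω ^ ((1 + N) / N) := by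
    intro ω
    rw [← Real.rpow_mul (hρ0 ω)]
    congr 1
    field_simp
  have heq :
      ((1 + N) * ∫ ω, (ρ ω ^ (1 / N)) * ρ ω ∂m) -
        (∫ ω, (ρ ω ^ (1 / N)) ^ (1 + N) ∂m) - N =
      N * (∫ ω, ρ ω ^ ((1 + N) / N) ∂m) - N := by
    simp only [hgρ, hgp]
    ring
  refine ⟨⟨⟨fun ω => ρ ω ^ (1 / N), hρm.pow_const _, fun ω => Real.rpow_nonneg (hρ0 ω) _,
      by simpa only [hgp] using hL1, heq.symm⟩, ?_⟩, heq⟩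
  rintro r ⟨g, hgm, hg0, hgint, rfl⟩
  have key : (1 + N) * ∫ ω, g ω * ρ ω ∂m ≤
      (∫ ω, g ω ^ (1 + N) ∂m) + N * ∫ ω, ρ ω ^ ((1 + N) / N) ∂m := by
    have hint : Integrable (fun ω => g ω ^ (1 + N) + N * ρ ω ^ ((1 + N) / N)) m :=
      hgint.add (hL1.const_mul N)
    have hmono := integral_mono_of_nonneg
      (f := fun ω => (1 + N) * (g ω * ρ ω))
      (g := fun ω => g ω ^ (1 + N) + N * ρ ω ^ ((1 + N) / N))
      (Filter.Eventually.of_forall fun ω => mul_nonneg (by linarith) (mul_nonneg (hg0 ω) (hρ0 ω)))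
      hint
      (Filter.Eventually.of_forall fun ω => young_aux hN (hg0 ω) (hρ0 ω))
    rwa [integral_const_mul, integral_add hgint (hL1.const_mul N), integral_const_mul] at hmono
  linarith
end
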